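/- arXiv:2103.02541 — 8 statements merged into one kernel-verified Lean document; each statement's English description precedes it below -/
import Mathlib

section
/- Let F be a positive semidefinite real form (homogeneous polynomial nonnegative on ℝ^d) that is not a sum of squares of real polynomials, and let s be an irreducible real form that changes sign on ℝ^d (is indefinite). Then s²·F is positive semidefinite but is also not a sum of squares of real polynomials. -/
/-!
If `s² F = ∑ hᵢ²`, every `hᵢ` vanishes on the real zero set of `s`. Because `s` is irreducible
and changes sign, this forces `s ∣ hᵢ`: along the lines through a small ball around a point
where `s > 0`, parallel to a direction leading to a point where `s < 0`, the polynomial `s` has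
a real zero at which `hᵢ` vanishes too, and if `s ∤ hᵢ` the resultant of the two (as
polynomials in the line parameter) would be a nonzero polynomial vanishing on that ball. Hence
`hᵢ = s kᵢ`, and cancelling `s²` exhibits `F = ∑ kᵢ²` as a sum of squares.
-/

open MvPolynomial

/-- A real form is PSD if it is nonnegative on `ℝ^d`. -/
def IsPSD {d : ℕ} (F : MvPolynomial (Fin d) ℝ) : Prop :=
  ∀ x : Fin d → ℝ, 0 ≤ eval x F

/-- A real polynomial is SOS if it is a finite sum of squares of real polynomials. -/
def IsSOS {d : ℕ} (F : MvPolynomial (Fin d) ℝ) : Prop :=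
  ∃ (k : ℕ) (h : Fin k → MvPolynomial (Fin d) ℝ), F = ∑ i, (h i) ^ 2

/-- A real form is indefinite if it changes sign on `ℝ^d`. -/
def IsIndefinite {d : ℕ} (s : MvPolynomial (Fin d) ℝ) : Prop :=
  (∃ x : Fin d → ℝ, 0 < eval x s) ∧ (∃ y : Fin d → ℝ, eval y s < 0)

theorem Polynomial.exists_mul_add_mul_eq_C_of_not_dvd {R : Type*} [CommRing R] [IsDomain R]
    [IsGCDMonoid R] {f g : Polynomial R} (hf : Irreducible f) (hdeg : f.natDegree ≠ 0)
    (hfg : ¬ f ∣ g) : ∃ c ≠ 0, ∃ p q : Polynomial R, f * p + g * q = Polynomial.C c := by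
  have hprim := hf.isPrimitive hdeg
  have hcop : IsCoprime (f.map (algebraMap R (FractionRing R)))
      (g.map (algebraMap R (FractionRing R))) :=
    (hprim.irreducible_iff_irreducible_map_fraction_map.mp hf).coprime_iff_not_dvd.mpr
      (by rwa [← hprim.dvd_iff_fraction_map_dvd_fraction_map (FractionRing R)])
  obtain ⟨p, q, -, -, hpq⟩ :=
    Polynomial.exists_mul_add_mul_eq_C_resultant f g le_rfl le_rfl (Or.inl hdeg)
  refine ⟨f.resultant g, fun h0 => Polynomial.resultant_ne_zero _ _ hcop ?_, p, q, hpq⟩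
  have hinj := IsFractionRing.injective R (FractionRing R)
  rw [Polynomial.natDegree_map_eq_of_injective hinj, Polynomial.natDegree_map_eq_of_injective hinj,
    Polynomial.resultant_map_map, h0, map_zero]

namespace MvPolynomial

section ShiftAlong

variable {σ R : Type*} [CommRing R]

/-- The substitution `Xᵢ ↦ Xᵢ + vᵢ T`, `T ↦ T` on `R[X₁, …][T]`, which restricts `f` to the
lines with direction `v`. -/
noncomputable def shiftAlong (v : σ → R) :
    Polynomial (MvPolynomial σ R) →+* Polynomial (MvPolynomial σ R) :=
  Polynomial.eval₂RingHom
    (eval₂Hom (Polynomial.C.comp C) fun i =>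
      Polynomial.C (X i) + Polynomial.C (C (v i)) * Polynomial.X)
    Polynomial.X

theorem shiftAlong_comp_shiftAlong_neg (v : σ → R) :
    (shiftAlong v).comp (shiftAlong (-v)) = RingHom.id _ := by
  apply Polynomial.ringHom_ext'
  · apply MvPolynomial.ringHom_ext
    · intro r
      simp [shiftAlong]
    · intro i
      simp [shiftAlong]
      ring
  · simp [shiftAlong]

noncomputable def shiftAlongEquiv (v : σ → R) :
    Polynomial (MvPolynomial σ R) ≃+* Polynomial (MvPolynomial σ R) :=
  RingEquiv.ofRingHom (shiftAlong v) (shiftAlong (-v)) (shiftAlong_comp_shiftAlong_neg v)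
    (by simpa using shiftAlong_comp_shiftAlong_neg (-v))

theorem eval₂_shiftAlongEquiv_C (v p : σ → R) (t : R) (f : MvPolynomial σ R) :
    (shiftAlongEquiv v (Polynomial.C f)).eval₂ (eval p) t = eval (p + t • v) f := by
  have : (Polynomial.eval₂RingHom (eval p) t).comp ((shiftAlong v).comp Polynomial.C) =
      eval (p + t • v) := by
    apply MvPolynomial.ringHom_ext
    · intro r
      simp [shiftAlong]
    · intro i
      simp [shiftAlong]
      ring
  exact DFunLike.congr_fun this f

end ShiftAlong

open Filter Topology

theorem eq_zero_of_eventually_eval_eq_zero {σ : Type*} [Fintype σ] {f : MvPolynomial σ ℝ}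
    {x : σ → ℝ} (h : ∀ᶠ p in 𝓝 x, eval p f = 0) : f = 0 := by
  obtain ⟨r, hr, hball⟩ := Metric.eventually_nhds_iff_ball.mp h
  refine funext_set (fun i => Metric.ball (x i) r) (fun i => ?_) fun p hp => ?_
  · rw [Real.ball_eq_Ioo]
    exact Set.Ioo_infinite (by linarith)
  · rw [← ball_pi x hr] at hp
    simpa using hball p hp

theorem exists_eval_add_smul_eq_zero {σ : Type*} (f : MvPolynomial σ ℝ) {p v : σ → ℝ}
    (h₀ : 0 < eval p f) (h₁ : eval (p + v) f < 0) : ∃ t : ℝ, eval (p + t • v) f = 0 := by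
  have hcont : Continuous fun t : ℝ => eval (p + t • v) f :=
    (continuous_eval f).comp (by fun_prop)
  obtain ⟨t, -, ht⟩ := intermediate_value_Icc' zero_le_one hcont.continuousOn
    (show (0 : ℝ) ∈ Set.Icc _ _ by simpa using And.intro h₁.le h₀.le)
  exact ⟨t, ht⟩

theorem dvd_of_forall_eval_eq_zero {σ : Type*} [Fintype σ] {s g : MvPolynomial σ ℝ}
    (hs : Irreducible s) (hpos : ∃ x, 0 < eval x s) (hneg : ∃ y, eval y s < 0)
    (hvan : ∀ p, eval p s = 0 → eval p g = 0) : s ∣ g := by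
  by_contra hsg
  obtain ⟨x, hx⟩ := hpos
  obtain ⟨y, hy⟩ := hneg
  set e := shiftAlongEquiv (y - x)
  have hS : Irreducible (e (Polynomial.C s)) :=
    ((MulEquiv.prime_iff e).mpr (Polynomial.prime_C_iff.mpr hs.prime)).irreducible
  have hdeg : (e (Polynomial.C s)).natDegree ≠ 0 := by
    intro h0
    have h₀ := eval₂_shiftAlongEquiv_C (y - x) x 0 s
    have h₁ := eval₂_shiftAlongEquiv_C (y - x) x 1 s
    rw [Polynomial.eq_C_of_natDegree_eq_zero h0, Polynomial.eval₂_C] at h₀ h₁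
    simp only [zero_smul, add_zero, one_smul, add_sub_cancel] at h₀ h₁
    linarith
  have hSG : ¬ e (Polynomial.C s) ∣ e (Polynomial.C g) := by
    rw [map_dvd_iff]
    exact fun h => hsg (by simpa using map_dvd Polynomial.constantCoeff h)
  obtain ⟨c, hc, P, Q, hPQ⟩ := Polynomial.exists_mul_add_mul_eq_C_of_not_dvd hS hdeg hSG
  refine hc (eq_zero_of_eventually_eval_eq_zero (x := x) ?_)
  have hpos_near : ∀ᶠ p in 𝓝 x, 0 < eval p s :=
    continuousAt_const.eventually_lt (continuous_eval s).continuousAt hx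
  have hneg_near : ∀ᶠ p in 𝓝 x, eval (p + (y - x)) s < 0 :=
    ((continuous_eval s).comp (continuous_add_const (y - x))).continuousAt.eventually_lt
      continuousAt_const (by simpa using hy)
  filter_upwards [hpos_near, hneg_near] with p hp hpv
  obtain ⟨t, ht⟩ := exists_eval_add_smul_eq_zero s hp hpv
  have hct := congrArg (Polynomial.eval₂ (eval p) t) hPQ
  rw [Polynomial.eval₂_add, Polynomial.eval₂_mul, Polynomial.eval₂_mul,
    eval₂_shiftAlongEquiv_C, eval₂_shiftAlongEquiv_C, ht, hvan _ ht, Polynomial.eval₂_C] at hct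
  simpa using hct.symm

theorem eval_eq_zero_of_eval_sum_sq_eq_zero {σ ι : Type*} [Fintype ι]
    {h : ι → MvPolynomial σ ℝ} {p : σ → ℝ} (hp : eval p (∑ i, h i ^ 2) = 0) (i : ι) :
    eval p (h i) = 0 := by
  simp only [map_sum, eval_pow] at hp
  exact pow_eq_zero_iff two_ne_zero |>.mp <|
    (Finset.sum_eq_zero_iff_of_nonneg fun j _ => sq_nonneg _).mp hp i (Finset.mem_univ i)

end MvPolynomial

theorem isSOS_of_sq_mul_eq_sum_sq {d k : ℕ} {s F : MvPolynomial (Fin d) ℝ}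
    {h : Fin k → MvPolynomial (Fin d) ℝ} (hs : s ≠ 0) (hsum : s ^ 2 * F = ∑ i, h i ^ 2)
    (hdvd : ∀ i, s ∣ h i) : IsSOS F := by
  choose q hq using hdvd
  refine ⟨k, q, mul_left_cancel₀ (pow_ne_zero 2 hs) ?_⟩
  simp only [hsum, hq, Finset.mul_sum, mul_pow]

theorem psd_not_sos_mul_sq_irreducible_indefinite_general
    {d : ℕ} (F s : MvPolynomial (Fin d) ℝ)
    (hFpsd : IsPSD F) (hFnotsos : ¬ IsSOS F)
    (hsirr : Irreducible s) (hsind : IsIndefinite s) :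
    IsPSD (s ^ 2 * F) ∧ ¬ IsSOS (s ^ 2 * F) := by
  refine ⟨fun p => by simpa only [eval_mul, eval_pow] using mul_nonneg (sq_nonneg _) (hFpsd p), ?_⟩
  rintro ⟨k, h, hsum⟩
  refine hFnotsos (isSOS_of_sq_mul_eq_sum_sq hsirr.ne_zero hsum fun i => ?_)
  refine dvd_of_forall_eval_eq_zero hsirr hsind.1 hsind.2 fun p hp => ?_
  exact eval_eq_zero_of_eval_sum_sq_eq_zero (by simp [← hsum, hp]) i

theorem psd_not_sos_mul_sq_irreducible_indefinite
    {d n m : ℕ} (F s : MvPolynomial (Fin d) ℝ)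
    (hFhom : F.IsHomogeneous n) (hFpsd : IsPSD F) (hFnotsos : ¬ IsSOS F)
    (hshom : s.IsHomogeneous m) (hsirr : Irreducible s) (hsind : IsIndefinite s) :
    IsPSD (s ^ 2 * F) ∧ ¬ IsSOS (s ^ 2 * F) :=
  psd_not_sos_mul_sq_irreducible_indefinite_general F s hFpsd hFnotsos hsirr hsind
end

section
/- If p(z)/q(z) is a scalar rational function of d complex variables with real coefficients, homogeneous of degree 1 (i.e. p has degree one more than q as forms), and Re(p(z)/q(z)) ≥ 0 whenever Re z₁ > 0, …, Re z_d > 0 and q(z) ≠ 0, then for every k = 1, …, d the partial Wronskian W_k(x) = q(x)·∂p/∂x_k(x) − p(x)·∂q/∂x_k(x) is nonnegative for all x ∈ ℝ^d. -/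
/-!
Since `p / q` is homogeneous of degree one, `p (I • w) / q (I • w) = I * (p w / q w)`, so
the hypothesis says that `p / q` maps the lower poly-halfplane into the closed lower half-plane,
i.e. `Im (p w * conj (q w)) ≤ 0` there, and by continuity also where all `Im w_j ≤ 0`.
Restrict to the line `x - s I e_k`, `s ≥ 0`: the function `g s = Im (p * conj q)` vanishes at
`s = 0` (where everything is real) and is `≤ 0` for `s > 0`, so `g' 0 ≤ 0`; a first-order
computation gives `g' 0 = -(q ∂ₖp - p ∂ₖq)(x)`.
-/

open MvPolynomial Complex ComplexConjugate Set

namespace MvPolynomial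

variable {σ R : Type*} [CommSemiring R]

theorem IsHomogeneous.aeval_smul {S : Type*} [CommSemiring S] [Algebra R S]
    {φ : MvPolynomial σ R} {n : ℕ} (hφ : φ.IsHomogeneous n) (c : S) (w : σ → S) :
    MvPolynomial.aeval (c • w) φ = c ^ n * MvPolynomial.aeval w φ := by
  rw [φ.as_sum, map_sum, map_sum, Finset.mul_sum]
  refine Finset.sum_congr rfl fun d hd => ?_
  have hdeg : ∑ i ∈ d.support, d i = n := by
    simpa [Finsupp.degree] using (hφ.degree_eq_sum_deg_support hd).symm
  simp only [aeval_monomial, Pi.smul_apply, smul_eq_mul, mul_pow, Finsupp.prod_mul]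
  rw [Finsupp.prod, Finset.prod_pow_eq_pow_sum, hdeg]
  ring

variable [DecidableEq σ]

noncomputable def lineRestrict (x : σ → R) (k : σ) : MvPolynomial σ R →ₐ[R] Polynomial R :=
  aeval (Function.update (fun j => Polynomial.C (x j)) k Polynomial.X)

theorem aeval_lineRestrict {S : Type*} [CommSemiring S] [Algebra R S] (x : σ → R) (k : σ)
    (p : MvPolynomial σ R) (z : S) :
    Polynomial.aeval z (lineRestrict x k p) =
      aeval (Function.update (algebraMap R S ∘ x) k z) p := by
  rw [lineRestrict, comp_aeval_apply]
  congr 2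
  funext j
  rw [Function.apply_update (fun _ => Polynomial.aeval z)]
  simp only [Polynomial.aeval_C, Polynomial.aeval_X, Function.comp_def]

theorem eval_lineRestrict_self (x : σ → R) (k : σ) (p : MvPolynomial σ R) :
    (lineRestrict x k p).eval (x k) = eval x p := by
  rw [← Polynomial.coe_aeval_eq_eval, aeval_lineRestrict]
  simp

theorem derivative_lineRestrict (x : σ → R) (k : σ) (p : MvPolynomial σ R) :
    Polynomial.derivative (lineRestrict x k p) = lineRestrict x k (pderiv k p) := by
  induction p using MvPolynomial.induction_on with
  | C a => simp [lineRestrict]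
  | add p q hp hq => simp only [map_add, hp, hq]
  | mul_X p j hp =>
    simp only [map_mul, Polynomial.derivative_mul, pderiv_mul, hp]
    rcases eq_or_ne j k with rfl | hjk
    · simp [lineRestrict]
    · simp [lineRestrict, hjk]

end MvPolynomial

theorem Polynomial.eval_wronskian_nonneg_of_im_mul_conj_nonpos (a b : Polynomial ℝ)
    (h : ∀ z : ℂ, z.im < 0 → (aeval z a * conj (aeval z b)).im ≤ 0) (r : ℝ) :
    0 ≤ (wronskian b a).eval r := by
  set g : ℝ → ℝ := fun s => (aeval (↑r - ↑s * I) a * conj (aeval (↑r - ↑s * I) b)).im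
  have hreal (c : Polynomial ℝ) : aeval (r : ℂ) c = ((c.eval r : ℝ) : ℂ) :=
    aeval_algebraMap_apply_eq_algebraMap_eval r c
  have hline : HasDerivAt (fun s : ℝ => (↑r - ↑s * I : ℂ)) (-I) 0 := by
    simpa using ((hasDerivAt_id (0 : ℝ)).ofReal_comp.mul_const I).const_sub (r : ℂ)
  have haeval (c : Polynomial ℝ) :
      HasDerivAt (fun s : ℝ => aeval (↑r - ↑s * I) c) (aeval (r : ℂ) (derivative c) * -I) 0 :=
    (c.hasDerivAt_aeval _).comp_of_eq 0 hline (by simp)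
  have hg : HasDerivAt g (-(wronskian b a).eval r) 0 := by
    refine (imCLM.hasFDerivAt.comp_hasDerivAt (0 : ℝ)
      ((haeval a).mul (haeval b).star)).congr_deriv ?_
    simp [hreal, wronskian, mul_comm, neg_add_eq_sub]
  have hmax : IsLocalMaxOn g (Ici 0) 0 := by
    have hg0 : g 0 = 0 := by simp [g, hreal]
    refine Filter.eventually_of_mem self_mem_nhdsWithin fun s (hs : 0 ≤ s) => ?_
    rcases hs.eq_or_lt with rfl | hs
    · exact le_rfl
    · rw [hg0]
      exact h (↑r - ↑s * I) (by simpa using hs)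
  have hone : (1 : ℝ) ∈ posTangentConeAt (Ici 0) 0 :=
    mem_posTangentConeAt_of_segment_subset (by simpa using Icc_subset_Ici_self)
  simpa using hmax.hasFDerivWithinAt_nonpos hg.hasFDerivAt.hasFDerivWithinAt hone

section HomogeneousDegreeOne

variable {σ : Type*} {n : ℕ} {p q : MvPolynomial σ ℝ}

theorem im_mul_conj_nonpos_of_im_neg
    (hp : p.IsHomogeneous (n + 1)) (hq : q.IsHomogeneous n)
    (hpos : ∀ z : σ → ℂ, (∀ k, 0 < (z k).re) → aeval z q ≠ 0 →
      0 ≤ ((aeval z p) / (aeval z q)).re)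
    {w : σ → ℂ} (hw : ∀ j, (w j).im < 0) :
    (aeval w p * conj (aeval w q)).im ≤ 0 := by
  rcases eq_or_ne (aeval w q) 0 with hq0 | hq0
  · simp [hq0]
  have hrot := hpos (I • w) (fun j => by simpa using hw j)
    (by simpa [hq.aeval_smul] using hq0)
  rw [hp.aeval_smul, hq.aeval_smul, pow_succ, mul_assoc,
    mul_div_mul_left _ _ (pow_ne_zero n I_ne_zero), mul_div_assoc] at hrot
  have him : (aeval w p / aeval w q).im ≤ 0 := by simpa using hrot
  rw [← div_mul_cancel₀ (aeval w p) hq0, mul_assoc, mul_conj, im_mul_ofReal]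
  exact mul_nonpos_of_nonpos_of_nonneg him (normSq_nonneg _)

theorem im_mul_conj_nonpos_of_im_nonpos
    (hp : p.IsHomogeneous (n + 1)) (hq : q.IsHomogeneous n)
    (hpos : ∀ z : σ → ℂ, (∀ k, 0 < (z k).re) → aeval z q ≠ 0 →
      0 ≤ ((aeval z p) / (aeval z q)).re)
    {w : σ → ℂ} (hw : ∀ j, (w j).im ≤ 0) :
    (aeval w p * conj (aeval w q)).im ≤ 0 := by
  have hcont (r : MvPolynomial σ ℝ) : Continuous fun v : σ → ℂ => aeval v r := by
    simpa only [aeval_def, eval₂_eq_eval_map] using continuous_eval (r.map (algebraMap ℝ ℂ))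
  have hlim : Filter.Tendsto (fun (ε : ℝ) j => w j - ε * I) (nhdsWithin 0 (Ioi 0)) (nhds w) :=
    tendsto_nhdsWithin_of_tendsto_nhds <| Continuous.tendsto' (by fun_prop) _ _ (by simp)
  refine le_of_tendsto (((by fun_prop : Continuous fun v : σ → ℂ =>
    (aeval v p * conj (aeval v q)).im).tendsto w).comp hlim) ?_
  filter_upwards [self_mem_nhdsWithin] with ε (hε : 0 < ε)
  exact im_mul_conj_nonpos_of_im_neg hp hq hpos fun j => by simpa using sub_neg_of_lt ((hw j).trans_lt hε)

end HomogeneousDegreeOne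

theorem wronskians_nonneg_of_positive_real_general
    {d n : ℕ} (p q : MvPolynomial (Fin d) ℝ)
    (hp : p.IsHomogeneous (n + 1)) (hq : q.IsHomogeneous n)
    (hpos : ∀ z : Fin d → ℂ, (∀ k, 0 < (z k).re) → aeval z q ≠ 0 →
      0 ≤ ((aeval z p) / (aeval z q)).re) :
    ∀ (k : Fin d) (x : Fin d → ℝ),
      0 ≤ eval x (q * pderiv k p - p * pderiv k q) := by
  intro k x
  have hline (z : ℂ) (hz : z.im < 0) :
      (Polynomial.aeval z (lineRestrict x k p) *
        conj (Polynomial.aeval z (lineRestrict x k q))).im ≤ 0 := by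
    simp only [aeval_lineRestrict]
    refine im_mul_conj_nonpos_of_im_nonpos hp hq hpos fun j => ?_
    rcases eq_or_ne j k with rfl | hjk
    · simpa using hz.le
    · simp [hjk]
  have hW := Polynomial.eval_wronskian_nonneg_of_im_mul_conj_nonpos _ _ hline (x k)
  simpa [Polynomial.wronskian, derivative_lineRestrict, eval_lineRestrict_self, mul_comm]
    using hW

theorem wronskians_nonneg_of_positive_real
    {d n : ℕ} (p q : MvPolynomial (Fin d) ℝ)
    (hp : p.IsHomogeneous (n + 1)) (hq : q.IsHomogeneous n) (hq0 : q ≠ 0)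
    (hpos : ∀ z : Fin d → ℂ, (∀ k, 0 < (z k).re) → aeval z q ≠ 0 →
      0 ≤ ((aeval z p) / (aeval z q)).re) :
    ∀ (k : Fin d) (x : Fin d → ℝ),
      0 ≤ eval x (q * pderiv k p - p * pderiv k q) :=
  wronskians_nonneg_of_positive_real_general p q hp hq hpos
end

section
/- A positive semidefinite real 2n-form F(z₁,…,z_d) is a sum of squares of real forms of degree n if and only if F admits a positive semidefinite Gram matrix, i.e. there exists a real symmetric positive semidefinite M×M matrix A (indexed by the monomials z^{α₁},…,z^{α_M} of degree n) with F(z) = ∑_{i,j} A_{ij} z^{α_i} z^{α_j}. -/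
/-!
A form of degree `n` is a real linear combination `∑ α, b α • z^α` of the degree-`n` monomials,
so for a matrix `B` whose rows are such coefficient vectors,
`∑ t, (∑ α, B t α • z^α)² = ∑ α β, (Bᵀ B) α β • z^α z^β`.
Hence a sum of squares of forms yields the Gram matrix `Bᵀ B`, and conversely a positive
semidefinite Gram matrix factors as `Bᵀ B` (take `B = A^{1/2}`), whose rows give the forms.
-/

open MvPolynomial

/-- The monomial `z^α` associated to an exponent function `α : Fin d → ℕ`. -/
noncomputable def monOf {d : ℕ} (α : Fin d → ℕ) : MvPolynomial (Fin d) ℝ :=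
  MvPolynomial.monomial (Finsupp.equivFunOnFinite.symm α) (1 : ℝ)

open Matrix

open scoped ComplexOrder in
lemma Matrix.posSemidef_iff_exists_eq_conjTranspose_mul_self {n 𝕜 : Type*} [Fintype n]
    [RCLike 𝕜] {A : Matrix n n 𝕜} : A.PosSemidef ↔ ∃ B : Matrix n n 𝕜, A = Bᴴ * B := by
  classical
  refine ⟨fun hA => ?_, fun ⟨B, hB⟩ => hB ▸ posSemidef_conjTranspose_mul_self B⟩
  open scoped MatrixOrder Norms.L2Operator in
  exact CStarAlgebra.nonneg_iff_eq_star_mul_self.mp hA.nonneg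

lemma MvPolynomial.sum_sq_eq_sum_sum_C_transpose_mul_self {R σ ι κ : Type*} [CommSemiring R]
    [Fintype ι] [Fintype κ] (B : Matrix κ ι R) (v : ι → MvPolynomial σ R) :
    ∑ t, (∑ i, C (B t i) * v i) ^ 2 = ∑ i, ∑ j, C ((Bᵀ * B) i j) * v i * v j := by
  simp_rw [sq, Finset.sum_mul_sum, mul_apply, transpose_apply, map_sum, map_mul, Finset.sum_mul]
  rw [Finset.sum_comm]
  refine Finset.sum_congr rfl fun i _ => ?_
  rw [Finset.sum_comm]
  exact Finset.sum_congr rfl fun j _ => Finset.sum_congr rfl fun t _ => by ring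

abbrev MonomialExponents (d n : ℕ) := {α : Fin d → ℕ // α ∈ Finset.Nat.antidiagonalTuple d n}

lemma isHomogeneous_monOf {d n : ℕ} (α : MonomialExponents d n) :
    (monOf α.1).IsHomogeneous n := by
  refine isHomogeneous_monomial _ ?_
  simpa [Finsupp.degree_eq_sum] using Finset.Nat.mem_antidiagonalTuple.mp α.2

lemma isHomogeneous_sum_C_mul_monOf {d n : ℕ} (b : MonomialExponents d n → ℝ) :
    (∑ α, C (b α) * monOf α.1).IsHomogeneous n :=
  IsHomogeneous.sum _ _ _ fun α _ => by
    simpa using (isHomogeneous_C _ (b α)).mul (isHomogeneous_monOf α)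

lemma MvPolynomial.IsHomogeneous.eq_sum_C_coeff_mul_monOf {d n : ℕ}
    {p : MvPolynomial (Fin d) ℝ} (hp : p.IsHomogeneous n) :
    p = ∑ α : MonomialExponents d n,
      C (coeff (Finsupp.equivFunOnFinite.symm α.1) p) * monOf α.1 := by
  let e : MonomialExponents d n ↪ (Fin d →₀ ℕ) :=
    (Function.Embedding.subtype _).trans Finsupp.equivFunOnFinite.symm.toEmbedding
  have hsupp : p.support ⊆ Finset.univ.map e := fun m hm => by
    have hdeg : m.degree = n := by_contra fun hne => mem_support_iff.mp hm (hp.coeff_eq_zero hne)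
    refine Finset.mem_map.mpr ⟨⟨Finsupp.equivFunOnFinite m, ?_⟩, Finset.mem_univ _, by simp [e]⟩
    simpa [Finset.Nat.mem_antidiagonalTuple, Finsupp.degree_eq_sum] using hdeg
  calc p = ∑ m ∈ p.support, monomial m (coeff m p) := p.as_sum
    _ = ∑ m ∈ Finset.univ.map e, monomial m (coeff m p) :=
      Finset.sum_subset hsupp fun m _ hm => by rw [notMem_support_iff.mp hm, monomial_zero]
    _ = _ := by simp [e, monOf, C_mul_monomial]

theorem sos_iff_psd_gram_general
    {d n : ℕ} (F : MvPolynomial (Fin d) ℝ) :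
    (∃ (k : ℕ) (h : Fin k → MvPolynomial (Fin d) ℝ),
        (∀ i, (h i).IsHomogeneous n) ∧ F = ∑ i, (h i) ^ 2) ↔
    (∃ A : Matrix {α : Fin d → ℕ // α ∈ Finset.Nat.antidiagonalTuple d n}
             {α : Fin d → ℕ // α ∈ Finset.Nat.antidiagonalTuple d n} ℝ,
        A.PosSemidef ∧
        F = ∑ i : {α : Fin d → ℕ // α ∈ Finset.Nat.antidiagonalTuple d n},
              ∑ j : {α : Fin d → ℕ // α ∈ Finset.Nat.antidiagonalTuple d n},
                C (A i j) * monOf i.1 * monOf j.1) := by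
  constructor
  · rintro ⟨k, h, hh, rfl⟩
    let B : Matrix (Fin k) (MonomialExponents d n) ℝ :=
      fun t α => coeff (Finsupp.equivFunOnFinite.symm α.1) (h t)
    refine ⟨Bᴴ * B, posSemidef_conjTranspose_mul_self B, ?_⟩
    rw [conjTranspose_eq_transpose_of_trivial, ← sum_sq_eq_sum_sum_C_transpose_mul_self]
    exact Finset.sum_congr rfl fun t _ => by rw [← (hh t).eq_sum_C_coeff_mul_monOf]
  · rintro ⟨A, hA, rfl⟩
    obtain ⟨B, rfl⟩ := (posSemidef_iff_exists_eq_conjTranspose_mul_self (𝕜 := ℝ)).mp hA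
    rw [conjTranspose_eq_transpose_of_trivial, ← sum_sq_eq_sum_sum_C_transpose_mul_self]
    let e := (Fintype.equivFin (MonomialExponents d n)).symm
    exact ⟨_, fun t => ∑ α, C (B (e t) α) * monOf α.1,
      fun t => isHomogeneous_sum_C_mul_monOf _, (e.sum_comp _).symm⟩

theorem sos_iff_psd_gram
    {d n : ℕ} (F : MvPolynomial (Fin d) ℝ)
    (hFhom : F.IsHomogeneous (2 * n))
    (hFpsd : ∀ x : Fin d → ℝ, 0 ≤ eval x F) :
    (∃ (k : ℕ) (h : Fin k → MvPolynomial (Fin d) ℝ),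
        (∀ i, (h i).IsHomogeneous n) ∧ F = ∑ i, (h i) ^ 2) ↔
    (∃ A : Matrix {α : Fin d → ℕ // α ∈ Finset.Nat.antidiagonalTuple d n}
             {α : Fin d → ℕ // α ∈ Finset.Nat.antidiagonalTuple d n} ℝ,
        A.PosSemidef ∧
        F = ∑ i : {α : Fin d → ℕ // α ∈ Finset.Nat.antidiagonalTuple d n},
              ∑ j : {α : Fin d → ℕ // α ∈ Finset.Nat.antidiagonalTuple d n},
                C (A i j) * monOf i.1 * monOf j.1) :=
  sos_iff_psd_gram_general F
end

section
/- Let F be a PSD not SOS real form. If s(z)²·F(z) is a sum of squares of real polynomials and every irreducible factor of the form s is indefinite (changes sign on ℝ^d), then F itself is a sum of squares of real polynomials (contradiction form: no such s exists). -/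
open MvPolynomial

/-!
An irreducible polynomial `p` that changes sign divides every polynomial `h` vanishing on its
real zero set. Moving one coordinate at a time, `p` changes sign along some coordinate line, hence
along that variable over a whole open set of values of the other variables; there `p` and `h`
have a common root in that variable, so their resultant in it vanishes on an open set, hence is
zero, and Gauss's lemma gives `p ∣ h`.
So if `p² G = ∑ hᵢ²`, every `hᵢ` vanishes where `p` does, `hᵢ = p gᵢ` and `G = ∑ gᵢ²`.
Peeling the irreducible factors of `s` off `s² F` one at a time shows that `F` is SOS.
The case `s = 0` is excluded by an irreducible factor of `X₀² + 1`, which is not indefinite,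
or, when `d = 0`, by `F` being a nonnegative constant.
-/

open Filter Topology
open Function (update)

namespace Polynomial

variable {S : Type*} [CommRing S]

theorem map_resultant_eq_zero_of_isRoot {T : Type*} [CommRing T] (φ : S →+* T) {P H : S[X]}
    (hP : P.natDegree ≠ 0) {t : T} (hPt : (P.map φ).IsRoot t) (hHt : (H.map φ).IsRoot t) :
    φ (P.resultant H) = 0 := by
  obtain ⟨A, B, -, -, hAB⟩ := exists_mul_add_mul_eq_C_resultant P H le_rfl le_rfl (.inl hP)
  have := congrArg (fun f ↦ (f.map φ).eval t) hAB
  simp only [Polynomial.map_add, Polynomial.map_mul, eval_add, eval_mul, hPt.eq_zero, hHt.eq_zero,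
    zero_mul, add_zero, map_C, eval_C] at this
  exact this.symm

variable [IsDomain S]

theorem isPrimitive_of_irreducible_of_natDegree_ne_zero {P : S[X]} (hP : Irreducible P)
    (hdeg : P.natDegree ≠ 0) : P.IsPrimitive := by
  refine isPrimitive_iff_isUnit_of_C_dvd.mpr fun r ⟨w, hw⟩ ↦ isUnit_C.mp ?_
  refine (hP.isUnit_or_isUnit hw).resolve_right fun hw' ↦ hdeg ?_
  rw [← Nat.le_zero, ← natDegree_eq_zero_of_isUnit hw', hw]
  exact natDegree_C_mul_le r w

/-- Gauss's lemma moves the question to the fraction field, where the resultant of an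
irreducible polynomial and a polynomial it does not divide is nonzero. -/
theorem dvd_of_resultant_eq_zero [IsGCDMonoid S] {P H : S[X]} (hP : Irreducible P)
    (hdeg : P.natDegree ≠ 0) (hres : P.resultant H = 0) : P ∣ H := by
  let K := FractionRing S
  have hinj := IsFractionRing.injective S K
  have hprim := isPrimitive_of_irreducible_of_natDegree_ne_zero hP hdeg
  rw [hprim.dvd_iff_fraction_map_dvd_fraction_map K]
  by_contra hndvd
  have hirr := (hprim.irreducible_iff_irreducible_map_fraction_map (K := K)).mp hP
  apply resultant_ne_zero _ _ (hirr.coprime_iff_not_dvd.mpr hndvd)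
  rw [natDegree_map_eq_of_injective hinj, natDegree_map_eq_of_injective hinj, resultant_map_map,
    hres, map_zero]

end Polynomial

namespace MvPolynomial

variable {σ : Type*}

theorem eq_zero_of_eval_eq_zero_of_mem_nhds {p : MvPolynomial σ ℝ} {U : Set (σ → ℝ)}
    {x : σ → ℝ} (hU : U ∈ 𝓝 x) (h : ∀ y ∈ U, eval y p = 0) : p = 0 := by
  rw [nhds_pi, Filter.mem_pi] at hU
  obtain ⟨I, -, s, hs, hsU⟩ := hU
  refine funext_set s (fun i ↦ infinite_of_mem_nhds _ (hs i)) fun y hy ↦ ?_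
  rw [h y (hsU fun i _ ↦ hy i trivial), map_zero]

theorem exists_eval_eq_zero_of_pos_of_neg {p : MvPolynomial σ ℝ} {a b : σ → ℝ}
    (ha : 0 < eval a p) (hb : eval b p < 0) : ∃ x, eval x p = 0 :=
  intermediate_value_univ b a (continuous_eval p) ⟨hb.le, ha.le⟩

theorem exists_polynomial_eval_eq_eval_update {R : Type*} [CommRing R] [DecidableEq σ]
    (p : MvPolynomial σ R) (x : σ → R) (i : σ) :
    ∃ q : Polynomial R, ∀ t, q.eval t = eval (update x i t) p := by
  refine ⟨aeval (update (fun j ↦ Polynomial.C (x j)) i Polynomial.X) p, fun t ↦ ?_⟩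
  have : (fun j ↦ Polynomial.aeval t (update (fun j ↦ Polynomial.C (x j)) i Polynomial.X j)) =
      update x i t := by
    funext j
    rcases eq_or_ne j i with rfl | hj <;> simp [*]
  rw [← Polynomial.coe_aeval_eq_eval, comp_aeval_apply, this]
  rfl

section SignChange

variable [DecidableEq σ] {p : MvPolynomial σ ℝ}

/-- The new value `t` is taken near `y i`, where `p (update y i t) < 0` persists, and off the
finitely many roots of the nonzero polynomial `t ↦ p (update x i t)`. -/
theorem exists_update_neg_or_update_pos_update_neg {x y : σ → ℝ} (hx : 0 < eval x p)
    (hy : eval y p < 0) (i : σ) :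
    (∃ t, eval (update x i t) p < 0) ∨
      ∃ t, 0 < eval (update x i t) p ∧ eval (update y i t) p < 0 := by
  obtain ⟨q, hq⟩ := exists_polynomial_eval_eq_eval_update p x i
  have hq0 : q ≠ 0 := by
    rintro rfl
    have h0 := hq (x i)
    rw [Polynomial.eval_zero, Function.update_eq_self] at h0
    exact hx.ne h0
  have hV : {t | eval (update y i t) p < 0} ∈ 𝓝 (y i) :=
    (isOpen_lt ((continuous_eval p).comp (continuous_const.update i continuous_id))
      continuous_const).mem_nhds (by simpa using hy)
  obtain ⟨t, htV, hqt⟩ : ∃ t ∈ {t | eval (update y i t) p < 0}, q.eval t ≠ 0 := by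
    by_contra! h
    exact hq0 (Polynomial.eq_zero_of_infinite_isRoot q ((infinite_of_mem_nhds _ hV).mono h))
  rw [hq] at hqt
  rcases hqt.lt_or_gt with hneg | hpos
  · exact .inl ⟨t, hneg⟩
  · exact .inr ⟨t, hpos, htV⟩

theorem exists_update_sign_change [Fintype σ] {a b : σ → ℝ} (ha : 0 < eval a p)
    (hb : eval b p < 0) : ∃ x i t, 0 < eval x p ∧ eval (update x i t) p < 0 := by
  suffices ∀ s : Finset σ, ∀ x y : σ → ℝ, 0 < eval x p → eval y p < 0 → (∀ j ∉ s, x j = y j) →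
      ∃ x i t, 0 < eval x p ∧ eval (update x i t) p < 0 from
    this Finset.univ a b ha hb (by simp)
  intro s
  induction s using Finset.induction_on with
  | empty =>
    intro x y hx hy hxy
    obtain rfl : x = y := _root_.funext fun j ↦ hxy j (by simp)
    exact absurd hx hy.not_gt
  | insert i s _ ih =>
    intro x y hx hy hxy
    rcases exists_update_neg_or_update_pos_update_neg hx hy i with ⟨t, ht⟩ | ⟨t, hxt, hyt⟩
    · exact ⟨x, i, t, hx, ht⟩
    refine ih _ _ hxt hyt fun j hj ↦ ?_
    rcases eq_or_ne j i with rfl | hji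
    · simp
    · simp [hji, hxy j (by simp [hji, hj])]

end SignChange

/-- For `c'` near `c` the polynomial `p (·, c')` still changes sign, so it has a real root, which
is a common root with `h (·, c')`; hence the resultant in the first variable vanishes near `c`. -/
theorem dvd_of_forall_eval_eq_zero_option {τ : Type*} {p h : MvPolynomial (Option τ) ℝ}
    (hp : Irreducible p) (hvan : ∀ z, eval z p = 0 → eval z h = 0) {t₁ t₂ : ℝ} {c : τ → ℝ}
    (h₁ : 0 < eval (fun o ↦ o.elim t₁ c) p) (h₂ : eval (fun o ↦ o.elim t₂ c) p < 0) : p ∣ h := by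
  set φ := optionEquivLeft ℝ τ
  have hline (f : MvPolynomial (Option τ) ℝ) (t : ℝ) (c' : τ → ℝ) :
      eval (fun o ↦ o.elim t c') f = ((φ f).map (eval c')).eval t :=
    optionEquivLeft_elim_eval ℝ τ c' t f
  have hdeg : (φ p).natDegree ≠ 0 := by
    intro h0
    obtain ⟨q, hq⟩ := Polynomial.natDegree_eq_zero.mp h0
    rw [hline, ← hq] at h₁ h₂
    simp only [Polynomial.map_C, Polynomial.eval_C] at h₁ h₂
    exact h₁.not_gt h₂
  have hcont (t : ℝ) : Continuous fun c' : τ → ℝ ↦ eval (fun o ↦ o.elim t c') p :=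
    (continuous_eval p).comp (continuous_pi fun o ↦ o.rec continuous_const continuous_apply)
  have hU : {c' | 0 < eval (fun o ↦ o.elim t₁ c') p ∧ eval (fun o ↦ o.elim t₂ c') p < 0} ∈ 𝓝 c :=
    ((isOpen_lt continuous_const (hcont t₁)).inter (isOpen_lt (hcont t₂) continuous_const)).mem_nhds
      ⟨h₁, h₂⟩
  have hres : (φ p).resultant (φ h) = 0 := by
    refine eq_zero_of_eval_eq_zero_of_mem_nhds hU fun c' ⟨hc₁, hc₂⟩ ↦ ?_
    rw [hline] at hc₁ hc₂
    obtain ⟨t₀, ht₀⟩ := intermediate_value_univ t₂ t₁ (Polynomial.continuous _) ⟨hc₂.le, hc₁.le⟩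
    have hroot : eval (fun o ↦ o.elim t₀ c') p = 0 := (hline ..).trans ht₀
    refine Polynomial.map_resultant_eq_zero_of_isRoot (eval c') hdeg ht₀ ?_
    rw [Polynomial.IsRoot.def, ← hline]
    exact hvan _ hroot
  exact (map_dvd_iff φ).mp
    (Polynomial.dvd_of_resultant_eq_zero ((MulEquiv.irreducible_iff φ).mpr hp) hdeg hres)

theorem eval_rename_optionSubtypeNe_symm [DecidableEq σ] (p : MvPolynomial σ ℝ) (x : σ → ℝ)
    (i : σ) (t : ℝ) :
    eval (fun o ↦ o.elim t fun j : {j // j ≠ i} ↦ x j) (rename (Equiv.optionSubtypeNe i).symm p) =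
      eval (update x i t) p := by
  have : (fun o ↦ o.elim t fun j : {j // j ≠ i} ↦ x j) ∘ (Equiv.optionSubtypeNe i).symm =
      update x i t := by
    funext j
    rcases eq_or_ne j i with rfl | hj <;> simp [*]
  rw [eval_rename, this]

theorem dvd_of_forall_eval_eq_zero_s6 [Fintype σ] {p h : MvPolynomial σ ℝ} (hp : Irreducible p)
    {a b : σ → ℝ} (ha : 0 < eval a p) (hb : eval b p < 0)
    (hvan : ∀ x, eval x p = 0 → eval x h = 0) : p ∣ h := by
  classical
  obtain ⟨x, i, t, hx, ht⟩ := exists_update_sign_change ha hb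
  set e := renameEquiv ℝ (Equiv.optionSubtypeNe i).symm
  refine (map_dvd_iff e).mp (dvd_of_forall_eval_eq_zero_option
    ((MulEquiv.irreducible_iff e).mpr hp) (fun z hz ↦ ?_) (t₁ := x i) (t₂ := t)
    (c := fun j ↦ x j) ?_ ?_)
  · simp only [e, renameEquiv_apply, eval_rename] at hz ⊢
    exact hvan _ hz
  · simpa [e, eval_rename_optionSubtypeNe_symm] using hx
  · simpa [e, eval_rename_optionSubtypeNe_symm] using ht

end MvPolynomial

section SumsOfSquares

variable {d : ℕ}

theorem IsSOS.sq_mul {G : MvPolynomial (Fin d) ℝ} (hG : IsSOS G) (c : MvPolynomial (Fin d) ℝ) :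
    IsSOS (c ^ 2 * G) := by
  obtain ⟨k, h, rfl⟩ := hG
  exact ⟨k, fun i ↦ c * h i, by simp only [Finset.mul_sum, mul_pow]⟩

theorem IsSOS.of_sq_mul_of_irreducible {p G : MvPolynomial (Fin d) ℝ} (hp : Irreducible p)
    (hind : IsIndefinite p) (h : IsSOS (p ^ 2 * G)) : IsSOS G := by
  obtain ⟨k, f, hf⟩ := h
  obtain ⟨⟨a, ha⟩, ⟨b, hb⟩⟩ := hind
  have hvan (i : Fin k) (x : Fin d → ℝ) (hx : eval x p = 0) : eval x (f i) = 0 := by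
    have hsum : ∑ j, eval x (f j) ^ 2 = 0 := by
      simpa [hx] using (congrArg (eval x) hf).symm
    exact pow_eq_zero_iff two_ne_zero |>.mp <|
      (Finset.sum_eq_zero_iff_of_nonneg fun j _ ↦ sq_nonneg _).mp hsum i (Finset.mem_univ i)
  choose g hg using fun i ↦ dvd_of_forall_eval_eq_zero_s6 hp ha hb (hvan i)
  refine ⟨k, g, mul_left_cancel₀ (pow_ne_zero 2 hp.ne_zero) ?_⟩
  rw [hf, Finset.mul_sum]
  exact Finset.sum_congr rfl fun i _ ↦ by rw [hg i]; ring

theorem IsSOS.of_sq_mul {s G : MvPolynomial (Fin d) ℝ} (hs : s ≠ 0)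
    (hfac : ∀ r, Irreducible r → r ∣ s → IsIndefinite r) (h : IsSOS (s ^ 2 * G)) : IsSOS G := by
  induction s using UniqueFactorizationMonoid.induction_on_prime generalizing G with
  | h₁ => exact absurd rfl hs
  | h₂ u hu =>
    obtain ⟨v, hv⟩ := hu.exists_right_inv
    simpa [← mul_assoc, ← mul_pow, mul_comm v u, hv] using h.sq_mul v
  | h₃ a p ha hp ih =>
    refine ih ha (fun r hr hra ↦ hfac r hr (hra.mul_left p)) ?_
    refine of_sq_mul_of_irreducible hp.irreducible (hfac p hp.irreducible (dvd_mul_right p a)) ?_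
    rwa [← mul_assoc, ← mul_pow]

end SumsOfSquares

theorem IsSOS.of_forall_eval_nonneg_fin_zero {F : MvPolynomial (Fin 0) ℝ}
    (hF : ∀ x, 0 ≤ eval x F) : IsSOS F := by
  refine ⟨1, fun _ ↦ C √(eval 0 F), MvPolynomial.funext fun x ↦ ?_⟩
  rw [Subsingleton.elim x 0]
  simp only [Finset.univ_unique, Finset.sum_singleton, map_pow, eval_C, Real.sq_sqrt (hF 0)]

theorem exists_irreducible_not_isIndefinite (d : ℕ) :
    ∃ r : MvPolynomial (Fin (d + 1)) ℝ, Irreducible r ∧ ¬ IsIndefinite r := by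
  have hpos (x : Fin (d + 1) → ℝ) : 0 < eval x (X 0 ^ 2 + 1) := by
    simp only [map_add, map_pow, eval_X, map_one]
    positivity
  have hunit : ¬ IsUnit (X 0 ^ 2 + 1 : MvPolynomial (Fin (d + 1)) ℝ) := by
    rw [isUnit_iff_eq_C_of_isReduced]
    rintro ⟨c, -, hc⟩
    have h0 := congrArg (eval 0) hc
    have h1 := congrArg (eval 1) hc
    simp only [map_add, map_pow, eval_X, map_one, eval_C, Pi.zero_apply, Pi.one_apply] at h0 h1
    linarith
  obtain ⟨r, hr, w, hrw⟩ :=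
    WfDvdMonoid.exists_irreducible_factor hunit fun h ↦ by simpa [h] using hpos 0
  refine ⟨r, hr, fun ⟨⟨a, ha⟩, ⟨b, hb⟩⟩ ↦ ?_⟩
  obtain ⟨x, hx⟩ := exists_eval_eq_zero_of_pos_of_neg ha hb
  simpa [hrw, hx] using hpos x

theorem no_indefinite_artin_denominator_general
    {d : ℕ} (F s : MvPolynomial (Fin d) ℝ)
    (hFpsd : ∀ x : Fin d → ℝ, 0 ≤ eval x F)
    (hFnotsos : ¬ IsSOS F)
    (hsF : IsSOS (s ^ 2 * F))
    (hfac : ∀ r : MvPolynomial (Fin d) ℝ, Irreducible r → r ∣ s → IsIndefinite r) :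
    False := by
  rcases eq_or_ne s 0 with rfl | hs
  · cases d with
    | zero => exact hFnotsos (.of_forall_eval_nonneg_fin_zero hFpsd)
    | succ d =>
      obtain ⟨r, hr, hrind⟩ := exists_irreducible_not_isIndefinite d
      exact hrind (hfac r hr (dvd_zero r))
  · exact hFnotsos (hsF.of_sq_mul hs hfac)

theorem no_indefinite_artin_denominator
    {d n m : ℕ} (F s : MvPolynomial (Fin d) ℝ)
    (hFhom : F.IsHomogeneous n)
    (hFpsd : ∀ x : Fin d → ℝ, 0 ≤ eval x F)
    (hFnotsos : ¬ IsSOS F)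
    (hshom : s.IsHomogeneous m)
    (hsF : IsSOS (s ^ 2 * F))
    (hfac : ∀ r : MvPolynomial (Fin d) ℝ, Irreducible r → r ∣ s → IsIndefinite r) :
    False :=
  no_indefinite_artin_denominator_general F s hFpsd hFnotsos hsF hfac
end

section
/- Let z^{α₁},…,z^{α_N} be all squarefree (multiaffine) monomials of degree n in z₁,…,z_d with 1 ≤ n ≤ d−1. For every squarefree monomial z^β of degree n+1 there exist real symmetric N×N matrices C₁,…,C_d, each of rank at most 2, such that (z₁C₁+⋯+z_dC_d)·(z^{α₁},…,z^{α_N})ᵀ = (z^β,0,…,0)ᵀ as an identity of polynomial vectors. -/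
/-!
Write `e = E ∪ P`, `T = E ∪ Q` with `E = e ∩ T`, `#P = k`, `#Q = k + 1`, and place the `2k + 1`
elements of `P ∪ Q` around the cycle `ZMod (2k + 1)`, first `P`, then `Q`. The `n`-sets
`v a = E ∪ {a, …, a + k - 1}` (cyclic windows) satisfy `v 0 = e`. The variable at position `a + k`
carries the rank-2 symmetric matrix of the edge `{v a, v (a + k + 1)}`. The two windows and that
position partition the cycle, so the edge contributes to each endpoint `z^E` times the monomial of
the complementary `(k + 1)`-window; thus both edges at a vertex contribute the same monomial. With
weight `1/2` on edges labelled in `Q` and `-1/2` on those labelled in `P`, the weights alternate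
along the odd cycle `a ↦ a + k + 1` and cancel at every vertex except `v 0`, where the two
`Q`-edges meet and give `z^E z^Q = z^T`.
-/

open MvPolynomial Finset

section EdgePencil

variable {V σ ι R : Type*} [DecidableEq V] [CommSemiring R]

def edgeMatrix (a b : V) (c : R) : Matrix V V R := Matrix.single a b c + Matrix.single b a c

lemma edgeMatrix_isSymm (a b : V) (c : R) : (edgeMatrix a b c).IsSymm := by
  rw [Matrix.IsSymm, edgeMatrix, Matrix.transpose_add, Matrix.transpose_single,
    Matrix.transpose_single, add_comm]

lemma rank_edgeMatrix_le [Fintype V] [StrongRankCondition R] (a b : V) (c : R) :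
    (edgeMatrix a b c).rank ≤ 2 := by
  refine (Matrix.rank_le_card_of_support_subset _ {a, b} fun r hr => ?_).trans card_le_two
  by_contra hab
  simp only [coe_insert, coe_singleton, Set.mem_insert_iff, Set.mem_singleton_iff, not_or] at hab
  exact hr (funext fun j => by simp [edgeMatrix, Ne.symm hab.1, Ne.symm hab.2])

lemma sum_edgeMatrix_mul [Fintype V] (a b : V) (c : R) (μ : V → MvPolynomial σ R) (r : V) :
    ∑ j, C (edgeMatrix a b c r j) * μ j =
      C c * ((if a = r then μ b else 0) + if b = r then μ a else 0) := by
  simp only [edgeMatrix, Matrix.add_apply, Matrix.single_apply, ite_and, map_add, add_mul,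
    sum_add_distrib, mul_add]
  congr 1 <;> split_ifs <;> simp [apply_ite C]

variable [Fintype ι] [DecidableEq σ]

def edgePencil (lbl : ι → σ) (a b : ι → V) (c : ι → R) (x : σ) : Matrix V V R :=
  ∑ i, if lbl i = x then edgeMatrix (a i) (b i) (c i) else 0

variable {lbl : ι → σ} {a b : ι → V} {c : ι → R}

lemma edgePencil_isSymm (x : σ) : (edgePencil lbl a b c x).IsSymm := by
  rw [Matrix.IsSymm, edgePencil, Matrix.transpose_sum]
  refine sum_congr rfl fun i _ => ?_
  split_ifs
  · exact edgeMatrix_isSymm _ _ _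
  · exact Matrix.transpose_zero

lemma edgePencil_label (hlbl : Function.Injective lbl) (i : ι) :
    edgePencil lbl a b c (lbl i) = edgeMatrix (a i) (b i) (c i) := by
  rw [edgePencil, Fintype.sum_eq_single i fun j hj => if_neg (hlbl.ne hj), if_pos rfl]

lemma edgePencil_of_notMem_range {x : σ} (hx : x ∉ Set.range lbl) :
    edgePencil lbl a b c x = 0 :=
  sum_eq_zero fun i _ => if_neg fun h => hx ⟨i, h⟩

lemma rank_edgePencil_le [Fintype V] [StrongRankCondition R] (hlbl : Function.Injective lbl)
    (x : σ) : (edgePencil lbl a b c x).rank ≤ 2 := by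
  by_cases hx : x ∈ Set.range lbl
  · obtain ⟨i, rfl⟩ := hx
    rw [edgePencil_label hlbl]
    exact rank_edgeMatrix_le _ _ _
  · rw [edgePencil_of_notMem_range hx]
    exact (Matrix.rank_le_card_of_support_subset 0 ∅
      (Function.support_subset_iff'.2 fun _ _ => rfl)).trans (by simp)

lemma sum_edgePencil_mul [Fintype V] [Fintype σ] (μ : V → MvPolynomial σ R) (r : V) :
    ∑ j, (∑ x, C (edgePencil lbl a b c x r j) * X x) * μ j =
      ∑ i, C (c i) * X (lbl i) *
        ((if a i = r then μ (b i) else 0) + if b i = r then μ (a i) else 0) := by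
  have hrow : ∀ j, ∑ x, C (edgePencil lbl a b c x r j) * X x =
      ∑ i, C (edgeMatrix (a i) (b i) (c i) r j) * X (lbl i) := by
    intro j
    simp only [edgePencil, Matrix.sum_apply]
    simp_rw [map_sum, sum_mul]
    rw [sum_comm]
    refine sum_congr rfl fun i _ => ?_
    rw [Fintype.sum_eq_single (lbl i) fun x hx => by rw [if_neg (Ne.symm hx)]; simp, if_pos rfl]
  simp_rw [hrow, sum_mul]
  rw [sum_comm]
  refine sum_congr rfl fun i _ => ?_
  simp_rw [mul_right_comm _ (X (lbl i)), ← sum_mul, sum_edgeMatrix_mul]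

end EdgePencil

section Window

variable {α : Type*} {m : ℕ} {u : ZMod m → α} {l : ℕ}

lemma injOn_window (hu : Function.Injective u) (a : ZMod m) (hl : l ≤ m) :
    Set.InjOn (fun i : ℕ => u (a + i)) (range l) := by
  intro i hi j hj hij
  simp only [coe_range, Set.mem_Iio] at hi hj
  have := congrArg ZMod.val (add_left_cancel (hu hij))
  rwa [ZMod.val_natCast, ZMod.val_natCast, Nat.mod_eq_of_lt (hi.trans_le hl),
    Nat.mod_eq_of_lt (hj.trans_le hl)] at this

variable [DecidableEq α]

def window (u : ZMod m → α) (a : ZMod m) (l : ℕ) : Finset α :=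
  (range l).image fun i : ℕ => u (a + i)

lemma card_window (hu : Function.Injective u) (a : ZMod m) (hl : l ≤ m) :
    #(window u a l) = l := by
  rw [window, card_image_of_injOn (injOn_window hu a hl), card_range]

lemma prod_window {M : Type*} [CommMonoid M] (hu : Function.Injective u) (a : ZMod m)
    (hl : l ≤ m) (f : α → M) : ∏ t ∈ window u a l, f t = ∏ i ∈ range l, f (u (a + i)) :=
  prod_image (injOn_window hu a hl)

lemma window_subset {S : Finset α} (hu : ∀ t, u t ∈ S) (a : ZMod m) (l : ℕ) :
    window u a l ⊆ S :=
  image_subset_iff.2 fun _ _ => hu _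

lemma window_eq_image_univ {a : ZMod m} {v : Fin l → α} (h : ∀ j : Fin l, u (a + j.val) = v j) :
    window u a l = univ.image v := by
  ext x
  simp only [window, mem_image, mem_range, mem_univ, true_and]
  constructor
  · rintro ⟨i, hi, rfl⟩
    exact ⟨⟨i, hi⟩, (h ⟨i, hi⟩).symm⟩
  · rintro ⟨j, rfl⟩
    exact ⟨j, j.isLt, h j⟩

end Window

lemma exists_injective_window_eq {α : Type*} [LinearOrder α] {k : ℕ} {P Q : Finset α}
    (hPQ : Disjoint P Q) (hP : #P = k) (hQ : #Q = k + 1) :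
    ∃ u : ZMod (2 * k + 1) → α, Function.Injective u ∧ (∀ t, u t ∈ P ∪ Q) ∧
      window u 0 k = P ∧ window u k (k + 1) = Q := by
  set p := P.orderEmbOfFin hP
  set q := Q.orderEmbOfFin hQ
  let u : ZMod (2 * k + 1) → α := fun t =>
    if h : t.val < k then p ⟨t.val, h⟩ else q ⟨t.val - k, by have := ZMod.val_lt t; omega⟩
  have hp_ne_q : ∀ i j, p i ≠ q j := fun i j h =>
    disjoint_left.1 hPQ (P.orderEmbOfFin_mem hP i) (h ▸ Q.orderEmbOfFin_mem hQ j)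
  refine ⟨u, fun s t hst => ?_, fun t => ?_, ?_, ?_⟩
  · apply ZMod.val_injective
    simp only [u] at hst
    split_ifs at hst
    · exact Fin.mk.inj_iff.1 (p.injective hst)
    · exact absurd hst (hp_ne_q _ _)
    · exact absurd hst.symm (hp_ne_q _ _)
    · have := Fin.mk.inj_iff.1 (q.injective hst)
      omega
  · simp only [u]
    split_ifs
    · exact mem_union_left _ (P.orderEmbOfFin_mem hP _)
    · exact mem_union_right _ (Q.orderEmbOfFin_mem hQ _)
  · rw [← P.image_orderEmbOfFin_univ hP]
    refine window_eq_image_univ fun j => ?_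
    have hj : (j : ℕ) < 2 * k + 1 := by omega
    simp [u, ZMod.val_natCast, Nat.mod_eq_of_lt hj, p]
  · rw [← Q.image_orderEmbOfFin_univ hQ]
    refine window_eq_image_univ fun j => ?_
    have hj : k + (j : ℕ) < 2 * k + 1 := by omega
    simp [u, ← Nat.cast_add, ZMod.val_natCast, Nat.mod_eq_of_lt hj, q]

section OddCycle

variable {R : Type*} [Field R] [NeZero (2 : R)] {k : ℕ}

def oddCycleCoeff (k : ℕ) (a : ZMod (2 * k + 1)) : R := if a.val ≤ k then 1 / 2 else -(1 / 2)

lemma oddCycleCoeff_add_oddCycleCoeff_add (a : ZMod (2 * k + 1)) :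
    oddCycleCoeff k a + oddCycleCoeff k (a + k) = (if a = 0 then 1 else 0 : R) := by
  have hk : (k : ZMod (2 * k + 1)).val = k := by rw [ZMod.val_natCast, Nat.mod_eq_of_lt (by omega)]
  rw [oddCycleCoeff, oddCycleCoeff, ZMod.val_add, hk]
  by_cases h0 : a = 0
  · rw [h0, ZMod.val_zero, zero_add, Nat.mod_eq_of_lt (by omega), if_pos k.zero_le, if_pos le_rfl,
      if_pos rfl, add_halves]
  have ha := ZMod.val_lt a
  have ha0 : a.val ≠ 0 := (ZMod.val_eq_zero a).not.2 h0
  rw [if_neg h0]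
  rcases le_or_gt a.val k with h | h
  · rw [Nat.mod_eq_of_lt (by omega), if_pos h, if_neg (by omega), add_neg_cancel]
  · rw [Nat.mod_eq_sub_mod (by omega), Nat.mod_eq_of_lt (by omega), if_neg (by omega),
      if_pos (by omega), neg_add_cancel]

variable {σ V : Type*} [Fintype σ] [DecidableEq σ] [Fintype V] [DecidableEq V]

def oddCyclePencil (u : ZMod (2 * k + 1) → σ) (v : ZMod (2 * k + 1) → V) : σ → Matrix V V R :=
  edgePencil (fun a => u (a + k)) v (fun a => v (a + (k + 1))) (oddCycleCoeff k)

lemma sum_oddCyclePencil_mul (u : ZMod (2 * k + 1) → σ) (v : ZMod (2 * k + 1) → V)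
    (μ : V → MvPolynomial σ R) (w : MvPolynomial σ R)
    (hμ : ∀ a, μ (v a) = w * ∏ i ∈ range k, X (u (a + i))) (r : V) :
    ∑ j, (∑ x, C (oddCyclePencil u v x r j) * X x) * μ j =
      if v 0 = r then w * ∏ i ∈ range (k + 1), X (u (k + i)) else 0 := by
  set ν : ZMod (2 * k + 1) → MvPolynomial σ R := fun b => w * ∏ i ∈ range (k + 1), X (u (b + i))
    with hν
  have hfwd : ∀ a, X (u (a + k)) * μ (v (a + (k + 1))) = ν (a + k) := by
    intro a
    have hshift : ∀ i : ℕ, a + (k + 1) + i = a + k + (i + 1 : ℕ) := fun i => by push_cast; ring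
    simp only [hν, hμ, prod_range_succ', hshift, Nat.cast_zero, add_zero]
    ring
  have hbwd : ∀ a, X (u (a + k)) * μ (v a) = ν a := by
    intro a
    simp only [hν, hμ, prod_range_succ]
    ring
  have hwrap : ∀ a : ZMod (2 * k + 1), a + k + (k + 1) = a := by
    intro a
    have := ZMod.natCast_self (2 * k + 1)
    push_cast at this
    linear_combination this
  calc _ = ∑ a, ((if v a = r then C (oddCycleCoeff k a) * ν (a + k) else 0) +
          if v (a + (k + 1)) = r then C (oddCycleCoeff k a) * ν a else 0) := by
        rw [oddCyclePencil, sum_edgePencil_mul]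
        refine sum_congr rfl fun a _ => ?_
        rw [← hfwd, ← hbwd]
        split_ifs <;> ring
    _ = ∑ a, if v a = r then C (if a = 0 then (1 : R) else 0) * ν (a + k) else 0 := by
        have hshift : ∑ a, (if v (a + (k + 1)) = r then C (oddCycleCoeff k a) * ν a else 0) =
            ∑ a, if v a = r then C (oddCycleCoeff k (a + k)) * ν (a + k) else 0 := by
          rw [← Equiv.sum_comp (Equiv.addRight (k : ZMod (2 * k + 1)))]
          simp only [Equiv.coe_addRight, hwrap]
        rw [sum_add_distrib, hshift, ← sum_add_distrib]
        refine sum_congr rfl fun a _ => ?_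
        rw [← oddCycleCoeff_add_oddCycleCoeff_add a, map_add]
        split_ifs <;> ring
    _ = if v 0 = r then w * ∏ i ∈ range (k + 1), X (u (k + i)) else 0 := by
        rw [Fintype.sum_eq_single 0 fun a ha => by simp [ha]]
        simp [hν]

end OddCycle

theorem multiaffine_monomial_pencil_representation_general
    {d n : ℕ}
    (T : Finset (Fin d)) (hT : T.card = n + 1)
    (e : {S : Finset (Fin d) // S.card = n}) :
    ∃ C : Fin d → Matrix {S : Finset (Fin d) // S.card = n}
                        {S : Finset (Fin d) // S.card = n} ℝ,
      (∀ k, (C k).IsSymm ∧ (C k).rank ≤ 2) ∧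
      ∀ i : {S : Finset (Fin d) // S.card = n},
        (∑ j : {S : Finset (Fin d) // S.card = n},
          (∑ k, MvPolynomial.C (C k i j) * X k) * ∏ t ∈ j.1, X t) =
        (if i = e then ∏ t ∈ T, (X t : MvPolynomial (Fin d) ℝ) else 0) := by
  obtain ⟨S, hS⟩ := e
  set k := #(S \ T) with hk
  have hSk : #(S ∩ T) + k = n := by rw [add_comm, card_sdiff_add_card_inter, hS]
  have hTk : #(T \ S) = k + 1 := by
    have := card_sdiff_add_card_inter T S
    rw [inter_comm] at this
    omega
  obtain ⟨u, hu, huPQ, huP, huQ⟩ := exists_injective_window_eq disjoint_sdiff_sdiff hk.symm hTk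
  have hdisj : ∀ a l, Disjoint (S ∩ T) (window u a l) := fun a l =>
    (disjoint_symmDiff_inf S T).symm.mono_right (window_subset huPQ a l)
  have hcard : ∀ a, #(S ∩ T ∪ window u a k) = n := fun a => by
    rw [card_union_of_disjoint (hdisj a k), card_window hu a (by omega), hSk]
  let v : ZMod (2 * k + 1) → {S : Finset (Fin d) // #S = n} := fun a => ⟨_, hcard a⟩
  refine ⟨oddCyclePencil u v, fun x => ⟨edgePencil_isSymm x,
    rank_edgePencil_le (hu.comp (add_left_injective _)) x⟩, fun r => ?_⟩
  rw [sum_oddCyclePencil_mul u v _ (∏ t ∈ S ∩ T, X t) fun a => by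
    rw [prod_union (hdisj a k), prod_window hu a (by omega)]]
  have hv0 : v 0 = ⟨S, hS⟩ := Subtype.ext (by simp only [v, huP]; exact sup_inf_sdiff S T)
  have hvT : (∏ t ∈ S ∩ T, X t) * ∏ i ∈ range (k + 1), X (u (k + i)) =
      ∏ t ∈ T, (X t : MvPolynomial (Fin d) ℝ) := by
    rw [← prod_window hu _ (by omega), huQ, ← prod_union (huQ ▸ hdisj _ _), inter_comm]
    exact congrArg (∏ t ∈ ·, X t) (sup_inf_sdiff T S)
  rw [hv0, hvT]
  exact if_congr eq_comm rfl rfl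

theorem multiaffine_monomial_pencil_representation
    {d n : ℕ} (hn1 : 1 ≤ n) (hnd : n ≤ d - 1)
    (T : Finset (Fin d)) (hT : T.card = n + 1)
    (e : {S : Finset (Fin d) // S.card = n}) :
    ∃ C : Fin d → Matrix {S : Finset (Fin d) // S.card = n}
                        {S : Finset (Fin d) // S.card = n} ℝ,
      (∀ k, (C k).IsSymm ∧ (C k).rank ≤ 2) ∧
      ∀ i : {S : Finset (Fin d) // S.card = n},
        (∑ j : {S : Finset (Fin d) // S.card = n},
          (∑ k, MvPolynomial.C (C k i j) * X k) * ∏ t ∈ j.1, X t) =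
        (if i = e then ∏ t ∈ T, (X t : MvPolynomial (Fin d) ℝ) else 0) :=
  multiaffine_monomial_pencil_representation_general T hT e
end

section
/- Let q(z) be a real form of degree n and P(z) a real symmetric m×m matrix-valued form of degree n+1 in d variables. Then there exist real symmetric matrices A₁,…,A_d such that q(ζ)·P(z) = Ψ(ζ)(z₁A₁+⋯+z_dA_d)Ψ(z)ᵀ for all ζ, z ∈ ℂ^d, where Ψ(z) = (z^{α₁}I_m,…,z^{α_N}I_m) and z^{α₁},…,z^{α_N} are all monomials of degree n. -/
/-!
By linearity it suffices to treat a single product `ζ^γ z^β` with `|γ| = n`, `|β| = n + 1`.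
Write the `2n + 1` letters of `γ` followed by those of `β` around a cycle, and let `M_r` be the
monomial with `ζ` on the `n` letters starting at position `r` and `z` on the other `n + 1`.
Cutting the cycle at `r` into these `n` letters `u`, the next letter `κ` and the last `n`
letters `v` gives the symmetric tensor with `A_κ = E_{uv} + E_{vu}` (and `A_k = 0` otherwise),
whose form is `M_r + M_{r+n+1}`. Since `n + 1` generates `ℤ/(2n+1)`, a group of odd order,
the alternating sum of these tensors over `r = j(n+1)`, `0 ≤ j ≤ 2n`, telescopes to
`2 M_0 = 2 ζ^γ z^β`.
-/

open MvPolynomial Finset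

namespace ProductPolarization

section Words

variable {α ι M : Type*} [Fintype α] [CommMonoid M]

def letterCount [DecidableEq α] (w : ι → α) (s : Finset ι) (t : α) : ℕ := #{i ∈ s | w i = t}

theorem prod_pow_letterCount [DecidableEq α] (z : α → M) (w : ι → α) (s : Finset ι) :
    ∏ t, z t ^ letterCount w s t = ∏ i ∈ s, z (w i) := by
  simp_rw [letterCount, ← prod_const, prod_fiberwise' s w z]

theorem sum_letterCount [DecidableEq α] (w : ι → α) (s : Finset ι) :
    ∑ t, letterCount w s t = #s :=
  (card_eq_sum_card_fiberwise fun _ _ => mem_univ _).symm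

theorem exists_word_prod_eq_prod_pow (γ : α → ℕ) {N : ℕ} (hN : ∑ t, γ t = N) :
    ∃ w : Fin N → α, ∀ z : α → M, ∏ i, z (w i) = ∏ t, z t ^ γ t := by
  have hcard : Fintype.card (Σ t, Fin (γ t)) = N := by simp [hN]
  refine ⟨fun i => ((Fintype.equivFinOfCardEq hcard).symm i).1, fun z => ?_⟩
  rw [Equiv.prod_comp (Fintype.equivFinOfCardEq hcard).symm (fun y => z y.1), Fintype.prod_sigma]
  simp

end Words

abbrev Exponents (d n : ℕ) := {α : Fin d → ℕ // α ∈ Finset.Nat.antidiagonalTuple d n}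

variable {d n : ℕ}

/-- `Ψ(ζ) (z₁A₁ + ⋯ + z_dA_d) Ψ(z)ᵀ` for a single block (`m = 1`). -/
def polarForm :
    (Fin d → Matrix (Exponents d n) (Exponents d n) ℝ) →ₗ[ℝ] (Fin d → ℂ) → (Fin d → ℂ) → ℂ where
  toFun A ζ z := ∑ i, ∑ j, (∏ t, ζ t ^ i.1 t) * (∑ k, z k * (A k i j : ℂ)) * ∏ t, z t ^ j.1 t
  map_add' A B := by
    funext ζ z
    simp only [Pi.add_apply, Matrix.add_apply, Complex.ofReal_add, mul_add, add_mul,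
      sum_add_distrib]
  map_smul' c A := by
    funext ζ z
    simp only [Pi.smul_apply, Matrix.smul_apply, smul_eq_mul, Complex.ofReal_mul, Complex.real_smul,
      RingHom.id_apply, mul_sum, sum_mul]
    refine sum_congr rfl fun i _ => sum_congr rfl fun j _ => sum_congr rfl fun k _ => by ring

variable (d n) in
def symmetricTensors : Submodule ℝ (Fin d → Matrix (Exponents d n) (Exponents d n) ℝ) where
  carrier := {A | ∀ k, (A k).IsSymm}
  add_mem' hA hB k := (hA k).add (hB k)
  zero_mem' _ := Matrix.isSymm_zero
  smul_mem' c _ hA k := (hA k).smul c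

variable (d n) in
noncomputable def symmetricPolarForms : Submodule ℝ ((Fin d → ℂ) → (Fin d → ℂ) → ℂ) :=
  (symmetricTensors d n).map polarForm

theorem polarForm_single (u v : Exponents d n) (κ : Fin d) (ζ z : Fin d → ℂ) :
    polarForm (Pi.single κ (Matrix.single u v 1)) ζ z =
      (∏ t, ζ t ^ u.1 t) * z κ * ∏ t, z t ^ v.1 t := by
  have hκ : ∀ i j, ∑ k, z k *
      ((Pi.single κ (Matrix.single u v 1) : Fin d → Matrix (Exponents d n) _ ℝ) k i j : ℂ) =
      z κ * ((Matrix.single u v 1 i j : ℝ) : ℂ) := fun i j => by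
    rw [Fintype.sum_eq_single κ fun k hk => by simp [hk]]
    simp
  simp only [polarForm, LinearMap.coe_mk, AddHom.coe_mk, hκ, Matrix.single_apply, ite_and,
    apply_ite Complex.ofReal, Complex.ofReal_one, Complex.ofReal_zero, mul_ite, ite_mul, mul_zero,
    zero_mul, mul_one, sum_ite_irrel, sum_const_zero, Fintype.sum_ite_eq]

theorem add_swap_mem_symmetricPolarForms (u v : Exponents d n) (κ : Fin d) :
    (fun ζ z => (∏ t, ζ t ^ u.1 t) * z κ * (∏ t, z t ^ v.1 t) +
      (∏ t, ζ t ^ v.1 t) * z κ * ∏ t, z t ^ u.1 t) ∈ symmetricPolarForms d n := by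
  refine ⟨Pi.single κ (Matrix.single u v 1) + Pi.single κ (Matrix.single v u 1), fun k => ?_, ?_⟩
  · rcases eq_or_ne k κ with rfl | hk
    · simp [Matrix.IsSymm, Matrix.transpose_single, add_comm]
    · simp [hk, Matrix.isSymm_zero]
  · funext ζ z
    simp [polarForm_single]

section Cyclic

variable (c : ZMod (2 * n + 1) → Fin d)

def window (r : ZMod (2 * n + 1)) : Exponents d n :=
  ⟨letterCount (fun i : ℕ => c (r + i)) (range n), by
    rw [Nat.mem_antidiagonalTuple, sum_letterCount, card_range]⟩

theorem prod_pow_window (z : Fin d → ℂ) (r : ZMod (2 * n + 1)) :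
    ∏ t, z t ^ (window c r).1 t = ∏ i ∈ range n, z (c (r + i)) :=
  prod_pow_letterCount z (fun i : ℕ => c (r + i)) (range n)

def cyclicTerm (r : ZMod (2 * n + 1)) : (Fin d → ℂ) → (Fin d → ℂ) → ℂ := fun ζ z =>
  (∏ i ∈ range n, ζ (c (r + i))) * ∏ i ∈ range (n + 1), z (c (r + n + i))

theorem cyclicTerm_add_cyclicTerm_mem (r : ZMod (2 * n + 1)) :
    cyclicTerm c r + cyclicTerm c (r + (n + 1)) ∈ symmetricPolarForms d n := by
  have hp : (2 * n + 1 : ZMod (2 * n + 1)) = 0 := by exact_mod_cast ZMod.natCast_self (2 * n + 1)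
  convert add_swap_mem_symmetricPolarForms (window c r) (window c (r + (n + 1))) (c (r + n)) using 1
  funext ζ z
  have h₁ : ∏ i ∈ range (n + 1), z (c (r + n + i)) =
      z (c (r + n)) * ∏ i ∈ range n, z (c (r + (n + 1) + i)) := by
    rw [prod_range_succ', mul_comm]
    push_cast
    simp only [add_zero, add_assoc, add_comm (1 : ZMod _)]
  have h₂ : ∏ i ∈ range (n + 1), z (c (r + (n + 1) + n + i)) =
      z (c (r + n)) * ∏ i ∈ range n, z (c (r + i)) := by
    have hshift : ∀ i : ℕ, r + (n + 1) + n + i = r + i := fun i => by linear_combination hp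
    simp_rw [hshift, prod_range_succ, mul_comm]
  simp only [Pi.add_apply, cyclicTerm, prod_pow_window, h₁, h₂]
  ring

theorem cyclicTerm_zero_mem : cyclicTerm c 0 ∈ symmetricPolarForms d n := by
  set g : ℕ → (Fin d → ℂ) → (Fin d → ℂ) → ℂ := fun j => ((-1 : ℝ) ^ j) • cyclicTerm c (j * (n + 1))
  have htel : (2 : ℝ) • cyclicTerm c 0 = ∑ j ∈ range (2 * n + 1), (g j - g (j + 1)) := by
    have hlast : ((2 * n + 1 : ℕ) : ZMod (2 * n + 1)) * (n + 1) = 0 := by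
      rw [ZMod.natCast_self, zero_mul]
    rw [sum_range_sub']
    simp only [g, hlast, Nat.cast_zero, zero_mul, pow_zero, one_smul, Odd.neg_one_pow ⟨n, rfl⟩,
      neg_one_smul, sub_neg_eq_add, two_smul]
  have hterm : ∀ j, g j - g (j + 1) =
      ((-1 : ℝ) ^ j) • (cyclicTerm c (j * (n + 1)) + cyclicTerm c (j * (n + 1) + (n + 1))) := by
    intro j
    simp only [g, pow_succ, mul_neg_one, neg_smul, sub_neg_eq_add, smul_add, Nat.cast_succ, add_mul,
      one_mul]
  rw [← Submodule.smul_mem_iff _ (two_ne_zero : (2 : ℝ) ≠ 0), htel]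
  exact sum_mem fun j _ => hterm j ▸ Submodule.smul_mem _ _ (cyclicTerm_add_cyclicTerm_mem c _)

end Cyclic

theorem monomial_mem_symmetricPolarForms (γ : Exponents d n) (β : Exponents d (n + 1)) :
    (fun ζ z => (∏ t, ζ t ^ γ.1 t) * ∏ t, z t ^ β.1 t) ∈ symmetricPolarForms d n := by
  obtain ⟨wγ, hwγ⟩ := exists_word_prod_eq_prod_pow (M := ℂ) γ.1 (Nat.mem_antidiagonalTuple.mp γ.2)
  obtain ⟨wβ, hwβ⟩ := exists_word_prod_eq_prod_pow (M := ℂ) β.1 (Nat.mem_antidiagonalTuple.mp β.2)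
  let c : ZMod (2 * n + 1) → Fin d := fun x =>
    if h : x.val < n then wγ ⟨x.val, h⟩ else wβ ⟨x.val - n, by have := ZMod.val_lt x; omega⟩
  have hcγ (i : Fin n) : c (0 + i) = wγ i := by
    have hi : ((i : ℕ) : ZMod (2 * n + 1)).val = i := ZMod.val_cast_of_lt (by omega)
    simp only [c, zero_add, hi, i.2, dite_true]
  have hcβ (i : Fin (n + 1)) : c (0 + n + i) = wβ i := by
    have hi : ((n + i : ℕ) : ZMod (2 * n + 1)).val = n + i := ZMod.val_cast_of_lt (by omega)
    simp [c, ← Nat.cast_add, hi]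
  convert cyclicTerm_zero_mem c using 1
  funext ζ z
  simp only [cyclicTerm, prod_range, hcγ, hcβ, hwγ, hwβ]

theorem coe_mem_antidiagonalTuple_of_mem_support {q : MvPolynomial (Fin d) ℝ}
    (hq : q.IsHomogeneous n) {δ : Fin d →₀ ℕ} (hδ : δ ∈ q.support) :
    ⇑δ ∈ Finset.Nat.antidiagonalTuple d n := by
  rw [Nat.mem_antidiagonalTuple, hq.degree_eq_sum_deg_support hδ]
  exact (sum_subset (subset_univ _) fun t _ ht => Finsupp.notMem_support_iff.mp ht).symm

theorem aeval_eq_sum_support (p : MvPolynomial (Fin d) ℝ) (z : Fin d → ℂ) :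
    aeval z p = ∑ δ ∈ p.support, ((coeff δ p : ℝ) : ℂ) * ∏ t, z t ^ δ t := by
  rw [aeval_def, eval₂_eq']
  rfl

theorem aeval_mul_aeval_mem_symmetricPolarForms {q p : MvPolynomial (Fin d) ℝ}
    (hq : q.IsHomogeneous n) (hp : p.IsHomogeneous (n + 1)) :
    (fun ζ z : Fin d → ℂ => aeval ζ q * aeval z p) ∈ symmetricPolarForms d n := by
  have hexpand : (fun ζ z : Fin d → ℂ => aeval ζ q * aeval z p) = ∑ δ ∈ q.support, ∑ ε ∈ p.support,
      (coeff δ q * coeff ε p) • fun ζ z : Fin d → ℂ => (∏ t, ζ t ^ δ t) * ∏ t, z t ^ ε t := by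
    funext ζ z
    simp only [aeval_eq_sum_support, sum_mul_sum, Finset.sum_apply, Pi.smul_apply,
      Complex.real_smul, Complex.ofReal_mul]
    refine sum_congr rfl fun δ _ => sum_congr rfl fun ε _ => by ring
  rw [hexpand]
  exact sum_mem fun δ hδ => sum_mem fun ε hε => Submodule.smul_mem _ _
    (monomial_mem_symmetricPolarForms ⟨δ, coe_mem_antidiagonalTuple_of_mem_support hq hδ⟩
      ⟨ε, coe_mem_antidiagonalTuple_of_mem_support hp hε⟩)

end ProductPolarization

open ProductPolarization in
theorem product_polarization
    {d n m : ℕ} (q : MvPolynomial (Fin d) ℝ)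
    (P : Matrix (Fin m) (Fin m) (MvPolynomial (Fin d) ℝ))
    (hq : q.IsHomogeneous n)
    (hPsymm : ∀ a b, P a b = P b a)
    (hPhom : ∀ a b, (P a b).IsHomogeneous (n + 1)) :
    ∃ A : Fin d → Matrix ({α : Fin d → ℕ // α ∈ Finset.Nat.antidiagonalTuple d n} × Fin m)
                         ({α : Fin d → ℕ // α ∈ Finset.Nat.antidiagonalTuple d n} × Fin m) ℝ,
      (∀ k, (A k).IsSymm) ∧
      ∀ (ζ z : Fin d → ℂ) (a b : Fin m),
        (aeval ζ q) * (aeval z (P a b)) =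
          ∑ i : {α : Fin d → ℕ // α ∈ Finset.Nat.antidiagonalTuple d n},
            ∑ j : {α : Fin d → ℕ // α ∈ Finset.Nat.antidiagonalTuple d n},
              (∏ t, ζ t ^ i.1 t) *
                (∑ k, z k * (A k (i, a) (j, b) : ℂ)) * ∏ t, z t ^ j.1 t := by
  -- `T` is a function of the polynomial, so the blocks `(a, b)` and `(b, a)` coincide.
  choose T hTsymm hT using fun p : {p : MvPolynomial (Fin d) ℝ // p.IsHomogeneous (n + 1)} =>
    Submodule.mem_map.mp (aeval_mul_aeval_mem_symmetricPolarForms hq p.2)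
  refine ⟨fun k x y => T ⟨P x.2 y.2, hPhom x.2 y.2⟩ k x.1 y.1, fun k => ?_, fun ζ z a b => ?_⟩
  · refine Matrix.IsSymm.ext fun x y => ?_
    have hswap : (⟨P y.2 x.2, hPhom y.2 x.2⟩ : {p // p.IsHomogeneous (n + 1)}) =
        ⟨P x.2 y.2, hPhom x.2 y.2⟩ := Subtype.ext (hPsymm _ _)
    simp only [hswap]
    exact (hTsymm _ k).apply x.1 y.1
  · exact (congrFun (congrFun (hT ⟨P a b, hPhom a b⟩) ζ) z).symm
end

section
/- With n₁,…,n_d, n, M, β as above: any two distinct monomials z^{α}, z^{α'} in M satisfying the admissibility bounds max(r_k−n_k,0) ≤ exponent_k ≤ min(r_k,n_k) are connected by a finite chain of pairwise distinct monomials in M, each satisfying the same bounds, such that consecutive monomials differ by an elementary transformation (increase one exponent by 1 and decrease another by 1). -/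
/-- Admissibility of an exponent multi-index: degree `n`, bounded by `nk`, and
satisfying the bounds `max (β k - nk k) 0 ≤ δ k ≤ min (β k) (nk k)`. -/
def Admissible {d : ℕ} (n : ℕ) (nk β δ : Fin d → ℕ) : Prop :=
  (∑ k, δ k = n) ∧ (∀ k, δ k ≤ nk k) ∧
    (∀ k, max (β k - nk k) 0 ≤ δ k ∧ δ k ≤ min (β k) (nk k))

/-- Elementary transformation: increase one exponent (below its bound) by 1 and
decrease another (positive) exponent by 1. -/
def ElemStep {d : ℕ} (nk δ δ' : Fin d → ℕ) : Prop :=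
  ∃ r l : Fin d, r ≠ l ∧ δ r < nk r ∧ 1 ≤ δ l ∧
    δ' = fun k => if k = r then δ k + 1 else if k = l then δ k - 1 else δ k

/-- ℓ¹ distance between two exponent multi-indices. -/
def Dst {d : ℕ} (δ δ' : Fin d → ℕ) : ℕ := ∑ k, ((δ k - δ' k) + (δ' k - δ k))

lemma dst_eq_zero {d : ℕ} {δ δ' : Fin d → ℕ} (h : Dst δ δ' = 0) : δ = δ' := by
  funext k
  rw [Dst, Finset.sum_eq_zero_iff] at h
  have := h k (Finset.mem_univ k)
  omega

lemma exists_lt_of_sum_eq {d : ℕ} {δ δ' : Fin d → ℕ}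
    (hs : ∑ k, δ k = ∑ k, δ' k) (hne : δ ≠ δ') : ∃ r, δ r < δ' r := by
  by_contra h
  push_neg at h
  apply hne
  funext k
  have := (Finset.sum_eq_sum_iff_of_le (fun i _ => h i)).mp hs.symm
  exact ((this k (Finset.mem_univ k))).symm

lemma chain_aux {d n : ℕ} (nk β α' : Fin d → ℕ) (hα' : Admissible n nk β α') :
    ∀ D (α : Fin d → ℕ), Dst α α' ≤ D → α ≠ α' → Admissible n nk β α →
    ∃ (m : ℕ) (c : Fin (m + 1) → (Fin d → ℕ)),
      c 0 = α ∧ c (Fin.last m) = α' ∧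
      (∀ i, Admissible n nk β (c i)) ∧
      (∀ i : Fin m, ElemStep nk (c i.castSucc) (c i.succ)) ∧
      (∀ i : Fin m, Dst (c i.succ) α' < Dst (c i.castSucc) α') := by
  intro D
  induction D with
  | zero =>
    intro α hD hne _
    exact absurd (dst_eq_zero (Nat.le_zero.mp hD)) hne
  | succ D ih =>
    intro α hD hne hα
    obtain ⟨hsum, hbd, hbox⟩ := hα
    obtain ⟨hsum', hbd', hbox'⟩ := hα'
    -- find r with α r < α' r and l with α' l < α l
    obtain ⟨r, hr⟩ := exists_lt_of_sum_eq (by rw [hsum, hsum']) hne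
    obtain ⟨l, hl⟩ := exists_lt_of_sum_eq (δ := α') (δ' := α) (by rw [hsum, hsum'])
      (fun h => hne h.symm)
    have hrl : r ≠ l := by intro h; subst h; omega
    set α₁ : Fin d → ℕ := fun k => if k = r then α k + 1 else if k = l then α k - 1 else α k
      with hα₁def
    have hstep : ElemStep nk α α₁ :=
      ⟨r, l, hrl, lt_of_lt_of_le hr (hbd' r), by omega, rfl⟩
    have hsum₁ : ∑ k, α₁ k = n := by
      have key : ∀ k, α₁ k + (if k = l then 1 else 0) = α k + (if k = r then 1 else 0) := by
        intro k
        simp only [hα₁def]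
        rcases eq_or_ne k r with h1 | h1 <;> rcases eq_or_ne k l with h2 | h2
        · exact absurd (h1.symm.trans h2) hrl
        · simp [h1, hrl]
        · subst h2
          simp only [if_neg (Ne.symm hrl), if_pos rfl, if_true, ite_true]
          omega
        · simp [h1, h2]
      have hs : ∑ k, (α₁ k + (if k = l then 1 else 0)) = ∑ k, (α k + (if k = r then 1 else 0)) :=
        Finset.sum_congr rfl (fun k _ => key k)
      rw [Finset.sum_add_distrib, Finset.sum_add_distrib, Finset.sum_ite_eq' Finset.univ l,
        Finset.sum_ite_eq' Finset.univ r] at hs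
      simp at hs
      omega
    have hadm₁ : Admissible n nk β α₁ := by
      refine ⟨hsum₁, ?_, ?_⟩
      · intro k
        simp only [hα₁def]
        have := hbd k
        have := hbd' r
        rcases eq_or_ne k r with h1 | h1
        · rw [if_pos h1, h1]; omega
        · rw [if_neg h1]; split_ifs <;> omega
      · intro k
        have b1 := hbox k
        have br := hbox' r
        have bl := hbox' l
        simp only [hα₁def]
        rcases eq_or_ne k r with h1 | h1
        · rw [if_pos h1, h1]; rw [h1] at b1; omega
        · rw [if_neg h1]
          rcases eq_or_ne k l with h2 | h2
          · rw [if_pos h2, h2]; rw [h2] at b1; omega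
          · rw [if_neg h2]; exact b1
    have hdst : Dst α₁ α' < Dst α α' := by
      apply Finset.sum_lt_sum
      · intro k _
        simp only [hα₁def]
        rcases eq_or_ne k r with h1 | h1
        · rw [if_pos h1, h1]; omega
        · rw [if_neg h1]
          rcases eq_or_ne k l with h2 | h2
          · rw [if_pos h2, h2]; omega
          · rw [if_neg h2]
      · refine ⟨r, Finset.mem_univ r, ?_⟩
        simp only [hα₁def, if_pos rfl]
        omega
    by_cases heq : α₁ = α'
    · refine ⟨1, ![α, α'], rfl, rfl, ?_, ?_, ?_⟩
      · intro i
        fin_cases i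
        · exact ⟨hsum, hbd, hbox⟩
        · exact ⟨hsum', hbd', hbox'⟩
      · intro i
        fin_cases i
        simpa using heq ▸ hstep
      · intro i
        fin_cases i
        simpa using heq ▸ hdst
    · obtain ⟨m, c, hc0, hclast, hcadm, hcstep, hcdst⟩ :=
        ih α₁ (by omega) heq hadm₁
      refine ⟨m + 1, Fin.cons α c, Fin.cons_zero _ _, ?_, ?_, ?_, ?_⟩
      · rw [show Fin.last (m + 1) = Fin.succ (Fin.last m) from rfl, Fin.cons_succ]
        exact hclast
      · intro i
        refine Fin.cases ?_ ?_ i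
        · simpa using ⟨hsum, hbd, hbox⟩
        · intro j; simpa [Fin.cons_succ] using hcadm j
      · intro i
        refine Fin.cases ?_ ?_ i
        · simpa [Fin.castSucc_zero, Fin.cons_succ, hc0] using hstep
        · intro j
          simpa only [← Fin.succ_castSucc, Fin.cons_succ] using hcstep j
      · intro i
        refine Fin.cases ?_ ?_ i
        · simpa [Fin.castSucc_zero, Fin.cons_succ, hc0] using hdst
        · intro j
          simpa only [← Fin.succ_castSucc, Fin.cons_succ] using hcdst j

theorem admissible_monomials_chain_connected
    {d n : ℕ} (nk β : Fin d → ℕ) (hβ : ∑ k, β k = 2 * n)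
    (α α' : Fin d → ℕ) (hne : α ≠ α')
    (hα : Admissible n nk β α) (hα' : Admissible n nk β α') :
    ∃ (m : ℕ) (c : Fin (m + 1) → (Fin d → ℕ)),
      c 0 = α ∧ c (Fin.last m) = α' ∧ Function.Injective c ∧
      (∀ i, Admissible n nk β (c i)) ∧
      ∀ i : Fin m, ElemStep nk (c i.castSucc) (c i.succ) := by
  obtain ⟨m, c, hc0, hclast, hcadm, hcstep, hcdst⟩ :=
    chain_aux nk β α' hα' (Dst α α') α le_rfl hne hα
  have hanti : StrictAnti (fun i : Fin (m + 1) => Dst (c i) α') :=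
    Fin.strictAnti_iff_succ_lt.mpr hcdst
  refine ⟨m, c, hc0, hclast, ?_, hcadm, hcstep⟩
  intro i j hij
  exact hanti.injective (by simp [hij])
end

section
/- Let q(z₀,z) be a Hurwitz form (homogeneous, nonvanishing on the open right poly-halfplane in d+1 variables) with deg_{z₀} q = n₀. Then the polynomial obtained by the degree reduction operator, q̂(ς₁,…,ς_{n₀}, z) = ∑_{k=0}^{n₀} p_{l−k}(z)·binom(n₀,k)⁻¹·σ_k(ς₁,…,ς_{n₀}) where q = ∑_k p_{l−k}(z) z₀^k and σ_k is the k-th elementary symmetric polynomial, is a Hurwitz form in d + n₀ variables. -/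
/-!
Fix `z` in the open right poly-halfplane and let `g(ξ) = q(ξ, z)`: a polynomial of degree at most
`n₀` without zeros in the right half-plane, whose polarization `∑ₖ binom(n₀, k)⁻¹ gₖ σₖ(ς)` is
`q̂(ς, z)`. Splitting off one variable `w = ς₁`, the polarization of `g` in `N` variables is `N⁻¹`
times the polarization in the other `N - 1` variables of the polar derivative `N g + (w - X) g'`.
By Laguerre's theorem this polar derivative has no zeros in the right half-plane either when
`Re w > 0`: at such a point `x`, `(N g + (w - x) g') / g` is a sum of `N` terms `(w - r) / (x - r)`,
one for each root `r` of `g` and a term `1` for each missing one, and multiplying by `conj w + x`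
moves every term into the open right half-plane. Induction on the number of variables concludes.
-/

namespace Multiset

variable {R : Type*} [CommSemiring R]

theorem esymm_zero_right (s : Multiset R) : s.esymm 0 = 1 := by
  simp [esymm, powersetCard_zero_left]

theorem esymm_eq_zero_of_card_lt {s : Multiset R} {k : ℕ} (h : card s < k) : s.esymm k = 0 := by
  simp [esymm, powersetCard_eq_empty _ h]

theorem esymm_cons_succ (a : R) (s : Multiset R) (k : ℕ) :
    (a ::ₘ s).esymm (k + 1) = s.esymm (k + 1) + a * s.esymm k := by
  simp only [esymm, powersetCard_cons, map_add, sum_add, map_map, Function.comp_def, prod_cons,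
    sum_map_mul_left]

theorem sum_ne_zero_of_forall_re_mul_pos {c : ℂ} {s : Multiset ℂ} (hs : s ≠ 0)
    (h : ∀ z ∈ s, 0 < (c * z).re) : s.sum ≠ 0 := by
  intro h0
  have hpos : (s.map fun _ => (0 : ℝ)).sum < (s.map fun z => (c * z).re).sum :=
    sum_lt_sum_of_nonempty hs h
  have hre : (s.map fun z => (c * z).re).sum = (c * s.sum).re := by
    have := map_multiset_sum Complex.reAddGroupHom (s.map (c * ·))
    rw [sum_map_mul_left, map_id', map_map] at this
    exact this.symm
  simp only [hre, h0, mul_zero, Complex.zero_re, map_const', sum_replicate, smul_zero,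
    lt_self_iff_false] at hpos

end Multiset

namespace Complex

theorem re_conj_add_mul_div_pos {x w r : ℂ} (hx : 0 < x.re) (hw : 0 < w.re) (hr : r.re ≤ 0) :
    0 < ((starRingEnd ℂ w + x) * ((w - r) / (x - r))).re := by
  have hxr : 0 < normSq (x - r) := normSq_pos.mpr fun h => by
    linarith [congrArg re (sub_eq_zero.mp h)]
  have hdiv : (starRingEnd ℂ w + x) * ((w - r) / (x - r))
      = (starRingEnd ℂ w + x) * ((w - r) * starRingEnd ℂ (x - r)) * ((normSq (x - r))⁻¹ : ℝ) := by
    rw [div_eq_mul_inv, inv_def, ofReal_inv]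
    ring
  have hnum : ((starRingEnd ℂ w + x) * ((w - r) * starRingEnd ℂ (x - r))).re
      = normSq (w - r) * x.re + normSq (x - r) * w.re - r.re * normSq (w - x) := by
    simp only [normSq_apply, mul_re, mul_im, sub_re, sub_im, add_re, add_im, conj_re, conj_im]
    ring
  rw [hdiv, re_mul_ofReal, hnum]
  have : 0 < normSq (w - r) * x.re + normSq (x - r) * w.re - r.re * normSq (w - x) := by
    nlinarith [normSq_nonneg (w - r), normSq_nonneg (w - x), mul_pos hxr hw]
  positivity

end Complex

namespace Polynomial

section PolarDeriv

variable {R : Type*} [CommRing R]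

/-- The polar derivative of `g`, viewed as a polynomial of degree `N`, with respect to `w`. -/
noncomputable def polarDeriv (N : ℕ) (w : R) (g : R[X]) : R[X] :=
  N • g + (C w - X) * derivative g

theorem coeff_polarDeriv (N : ℕ) (w : R) (g : R[X]) (k : ℕ) :
    (polarDeriv N w g).coeff k = (N - k) * g.coeff k + w * (k + 1) * g.coeff (k + 1) := by
  rcases k with _ | k
  · simp [polarDeriv, coeff_derivative, sub_mul]
  · simp only [polarDeriv, nsmul_eq_mul, sub_mul, coeff_add, coeff_natCast_mul, coeff_sub,
      coeff_C_mul, coeff_derivative, Nat.cast_add, Nat.cast_one, coeff_X_mul]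
    ring

theorem natDegree_polarDeriv_le {N : ℕ} (w : R) {g : R[X]} (hg : g.natDegree ≤ N) :
    (polarDeriv N w g).natDegree ≤ N - 1 := by
  refine natDegree_le_iff_coeff_eq_zero.mpr fun k hk => ?_
  have hk : N ≤ k := by omega
  rw [coeff_polarDeriv, coeff_eq_zero_of_natDegree_lt (by omega : g.natDegree < k + 1)]
  rcases hk.eq_or_lt with rfl | hlt
  · simp
  · simp [coeff_eq_zero_of_natDegree_lt (hg.trans_lt hlt)]

theorem eval_polarDeriv (N : ℕ) (w x : R) (g : R[X]) :
    (polarDeriv N w g).eval x = N * g.eval x + (w - x) * (derivative g).eval x := by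
  simp [polarDeriv]

theorem eval_polarDeriv_ne_zero {N : ℕ} (hN : 0 < N) {g : ℂ[X]} (hdeg : g.natDegree ≤ N)
    (hg : ∀ ξ : ℂ, 0 < ξ.re → g.eval ξ ≠ 0) {w x : ℂ} (hw : 0 < w.re) (hx : 0 < x.re) :
    (polarDeriv N w g).eval x ≠ 0 := by
  have hroots : ∀ r ∈ g.roots, r.re ≤ 0 := fun r hr =>
    not_lt.mp fun h => hg r h (isRoot_of_mem_roots hr)
  have hxr : ∀ r ∈ g.roots, x - r ≠ 0 := fun r hr h => by
    linarith [hroots r hr, congrArg Complex.re (sub_eq_zero.mp h)]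
  have hcard : Multiset.card g.roots ≤ N := (card_roots' g).trans hdeg
  set terms : Multiset ℂ :=
    Multiset.replicate (N - Multiset.card g.roots) 1 + g.roots.map fun r => (w - r) / (x - r)
  have hterms : (polarDeriv N w g).eval x = g.eval x * terms.sum := by
    rw [eval_polarDeriv, (IsAlgClosed.splits g).eval_derivative_eq_eval_mul_sum (hg x hx)]
    have hsum : (g.roots.map fun r => (w - r) / (x - r)).sum
        = Multiset.card g.roots + (w - x) * (g.roots.map fun r => 1 / (x - r)).sum := by
      rw [Multiset.map_congr rfl fun r hr =>
        show (w - r) / (x - r) = 1 + (w - x) * (1 / (x - r)) by field_simp [hxr r hr]; ring]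
      rw [Multiset.sum_map_add, Multiset.sum_map_mul_left, Multiset.map_const',
        Multiset.sum_replicate, nsmul_one]
    simp only [terms, Multiset.sum_add, Multiset.sum_replicate, nsmul_one, hsum]
    push_cast [Nat.cast_sub hcard]
    ring
  have hne : terms ≠ 0 := by
    rw [← Multiset.card_pos]
    simp only [terms, Multiset.card_add, Multiset.card_replicate, Multiset.card_map]
    omega
  rw [hterms]
  refine mul_ne_zero (hg x hx)
    (Multiset.sum_ne_zero_of_forall_re_mul_pos (c := starRingEnd ℂ w + x) hne ?_)
  simp only [terms, Multiset.mem_add, Multiset.mem_map]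
  rintro z (hz | ⟨r, hr, rfl⟩)
  · rw [Multiset.eq_of_mem_replicate hz, mul_one, Complex.add_re, Complex.conj_re]
    linarith
  · exact Complex.re_conj_add_mul_div_pos hx hw (hroots r hr)

end PolarDeriv

section Polarization

variable {K : Type*} [Field K]

/-- The symmetric multiaffine polynomial in `N` variables whose restriction to the diagonal is `g`,
evaluated at the multiset `s` of `N` points. -/
noncomputable def polarization (N : ℕ) (g : K[X]) (s : Multiset K) : K :=
  ∑ k ∈ Finset.range (N + 1), (N.choose k : K)⁻¹ * g.coeff k * s.esymm k

theorem polarization_cons [CharZero K] {n : ℕ} (g : K[X]) (w : K) {t : Multiset K}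
    (ht : Multiset.card t ≤ n) :
    polarization (n + 1) g (w ::ₘ t)
      = ((n : K) + 1)⁻¹ * polarization n (polarDeriv (n + 1) w g) t := by
  set c : ℕ → K := fun k => ((n + 1).choose k : K)⁻¹ * g.coeff k
  have hsplit : polarization (n + 1) g (w ::ₘ t)
      = ∑ k ∈ Finset.range (n + 1), (c k + w * c (k + 1)) * t.esymm k := by
    have htop : c (n + 1) * t.esymm (n + 1) = 0 := by
      rw [Multiset.esymm_eq_zero_of_card_lt (by omega), mul_zero]
    have hshift := Finset.sum_range_succ' (fun k => c k * t.esymm k) (n + 1)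
    rw [Finset.sum_range_succ, htop, add_zero, Multiset.esymm_zero_right, mul_one] at hshift
    simp only [polarization, Finset.sum_range_succ' _ (n + 1), Multiset.esymm_cons_succ,
      Multiset.esymm_zero_right, mul_one, mul_add, Finset.sum_add_distrib, add_mul]
    simp only [c] at hshift ⊢
    rw [hshift, add_right_comm]
    exact congrArg₂ _ rfl (Finset.sum_congr rfl fun k _ => by ring)
  rw [hsplit, polarization, Finset.mul_sum]
  refine Finset.sum_congr rfl fun k hk => ?_
  have hk : k ≤ n := Finset.mem_range_succ_iff.mp hk
  have e1 := congrArg (Nat.cast : ℕ → K) (Nat.choose_mul_succ_eq n k)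
  have e2 := congrArg (Nat.cast : ℕ → K) (Nat.add_one_mul_choose_eq n k)
  push_cast [Nat.cast_sub (by omega : k ≤ n + 1)] at e1 e2
  have hc1 : ((n + 1).choose k : K) ≠ 0 := by exact_mod_cast (Nat.choose_pos (by omega)).ne'
  have hc2 : ((n + 1).choose (k + 1) : K) ≠ 0 := by exact_mod_cast (Nat.choose_pos (by omega)).ne'
  have hc3 : (n.choose k : K) ≠ 0 := by exact_mod_cast (Nat.choose_pos hk).ne'
  have hc4 : (n : K) + 1 ≠ 0 := by exact_mod_cast n.succ_ne_zero
  rw [coeff_polarDeriv]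
  simp only [c]
  field_simp
  push_cast
  linear_combination (g.coeff k * ((n + 1).choose (k + 1) : K) * t.esymm k) * e1
    + (((n + 1).choose k : K) * w * g.coeff (k + 1) * t.esymm k) * e2

theorem polarization_ne_zero {n : ℕ} {g : ℂ[X]} (hdeg : g.natDegree ≤ n)
    (hg : ∀ ξ : ℂ, 0 < ξ.re → g.eval ξ ≠ 0) {s : Multiset ℂ} (hs : Multiset.card s = n)
    (hpos : ∀ z ∈ s, 0 < z.re) : polarization n g s ≠ 0 := by
  subst hs
  induction s using Multiset.induction_on generalizing g with
  | empty =>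
    rw [eq_C_of_natDegree_le_zero hdeg] at hg
    simpa [polarization, Multiset.esymm_zero_right] using hg 1 one_pos
  | cons w t ih =>
    have hw : 0 < w.re := hpos w (Multiset.mem_cons_self w t)
    rw [Multiset.card_cons] at hdeg ⊢
    rw [polarization_cons g w le_rfl]
    refine mul_ne_zero (inv_ne_zero (by exact_mod_cast (Multiset.card t).succ_ne_zero)) ?_
    exact ih (fun ξ hξ => eval_polarDeriv_ne_zero (Nat.succ_pos _) hdeg hg hw hξ)
      (fun z hz => hpos z (Multiset.mem_cons_of_mem hz))
      (by simpa using natDegree_polarDeriv_le w hdeg)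

end Polarization

theorem eval_ofFn {R : Type*} [CommSemiring R] [DecidableEq R] (n : ℕ) (v : Fin n → R) (x : R) :
    (ofFn n v).eval x = ∑ i : Fin n, v i * x ^ (i : ℕ) := by
  simp [ofFn_eq_sum_monomial, eval_finsetSum]

end Polynomial

open MvPolynomial

namespace MvPolynomial

theorem isHomogeneous_esymm (σ R : Type*) [CommSemiring R] [Fintype σ] (k : ℕ) :
    (esymm σ R k).IsHomogeneous k := by
  refine IsHomogeneous.sum _ _ _ fun t ht => ?_
  have := IsHomogeneous.prod t (fun i => X i) (fun _ => 1) fun i _ => isHomogeneous_X R i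
  simpa [(Finset.mem_powersetCard.mp ht).2] using this

variable {σ R : Type*} [Field R] {n : ℕ}

/-- The degree reduction operator `q ↦ q̂`, on `q = ∑ₖ (p k) z₀ ^ k`. -/
noncomputable def degreeReduction (p : Fin (n + 1) → MvPolynomial σ R) :
    MvPolynomial (Fin n ⊕ σ) R :=
  ∑ k : Fin (n + 1),
    C ((n.choose k : R)⁻¹) * rename Sum.inr (p k) * rename Sum.inl (esymm (Fin n) R k)

theorem isHomogeneous_degreeReduction {l : ℕ} (hnl : n ≤ l) {p : Fin (n + 1) → MvPolynomial σ R}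
    (hp : ∀ k : Fin (n + 1), (p k).IsHomogeneous (l - k)) :
    (degreeReduction p).IsHomogeneous l := by
  refine IsHomogeneous.sum _ _ _ fun k _ => ?_
  rw [show l = 0 + (l - k) + k by omega]
  exact ((isHomogeneous_C _ _).mul (hp k).rename_isHomogeneous).mul
    (isHomogeneous_esymm _ _ _).rename_isHomogeneous

theorem aeval_degreeReduction {S : Type*} [Field S] [DecidableEq S] [Algebra R S]
    (p : Fin (n + 1) → MvPolynomial σ R) (w : Fin n ⊕ σ → S) :
    aeval w (degreeReduction p)
      = (Polynomial.ofFn (n + 1) fun k => aeval (w ∘ Sum.inr) (p k)).polarization n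
          (Finset.univ.val.map (w ∘ Sum.inl)) := by
  rw [degreeReduction, Polynomial.polarization, Finset.sum_range, map_sum]
  refine Finset.sum_congr rfl fun k _ => ?_
  simp [aeval_rename, aeval_esymm_eq_multiset_esymm, k.isLt]

end MvPolynomial

theorem degree_reduction_preserves_hurwitz_general
    {d n₀ l : ℕ} (hn₀l : n₀ ≤ l)
    (p : Fin (n₀ + 1) → MvPolynomial (Fin d) ℝ)
    (hhom : ∀ k : Fin (n₀ + 1), (p k).IsHomogeneous (l - (k : ℕ)))
    (hHurwitz : ∀ (z₀ : ℂ) (z : Fin d → ℂ), 0 < z₀.re → (∀ j, 0 < (z j).re) →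
      (∑ k : Fin (n₀ + 1), aeval z (p k) * z₀ ^ (k : ℕ)) ≠ 0) :
    (∑ k : Fin (n₀ + 1),
        C ((Nat.choose n₀ (k : ℕ) : ℝ)⁻¹) *
          rename Sum.inr (p k) *
          rename (Sum.inl : Fin n₀ → Fin n₀ ⊕ Fin d)
            (esymm (Fin n₀) ℝ (k : ℕ))).IsHomogeneous l ∧
    ∀ w : Fin n₀ ⊕ Fin d → ℂ, (∀ j, 0 < (w j).re) →
      aeval w (∑ k : Fin (n₀ + 1),
        C ((Nat.choose n₀ (k : ℕ) : ℝ)⁻¹) *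
          rename Sum.inr (p k) *
          rename (Sum.inl : Fin n₀ → Fin n₀ ⊕ Fin d)
            (esymm (Fin n₀) ℝ (k : ℕ))) ≠ 0 := by
  refine ⟨isHomogeneous_degreeReduction hn₀l hhom, fun w hw => ?_⟩
  rw [← degreeReduction, aeval_degreeReduction]
  refine Polynomial.polarization_ne_zero
    (Nat.lt_succ_iff.mp (Polynomial.ofFn_natDegree_lt (Nat.succ_pos n₀) _)) (fun ξ hξ => ?_)
    (by simp) (by simpa using fun i => hw (.inl i))
  rw [Polynomial.eval_ofFn]
  exact hHurwitz ξ _ hξ fun j => hw (.inr j)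

theorem degree_reduction_preserves_hurwitz
    {d n₀ l : ℕ} (hn₀l : n₀ ≤ l)
    (p : Fin (n₀ + 1) → MvPolynomial (Fin d) ℝ)
    (hhom : ∀ k : Fin (n₀ + 1), (p k).IsHomogeneous (l - (k : ℕ)))
    (htop : p (Fin.last n₀) ≠ 0)
    (hHurwitz : ∀ (z₀ : ℂ) (z : Fin d → ℂ), 0 < z₀.re → (∀ j, 0 < (z j).re) →
      (∑ k : Fin (n₀ + 1), aeval z (p k) * z₀ ^ (k : ℕ)) ≠ 0) :
    (∑ k : Fin (n₀ + 1),
        C ((Nat.choose n₀ (k : ℕ) : ℝ)⁻¹) *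
          rename Sum.inr (p k) *
          rename (Sum.inl : Fin n₀ → Fin n₀ ⊕ Fin d)
            (esymm (Fin n₀) ℝ (k : ℕ))).IsHomogeneous l ∧
    ∀ w : Fin n₀ ⊕ Fin d → ℂ, (∀ j, 0 < (w j).re) →
      aeval w (∑ k : Fin (n₀ + 1),
        C ((Nat.choose n₀ (k : ℕ) : ℝ)⁻¹) *
          rename Sum.inr (p k) *
          rename (Sum.inl : Fin n₀ → Fin n₀ ⊕ Fin d)
            (esymm (Fin n₀) ℝ (k : ℕ))) ≠ 0 :=
  degree_reduction_preserves_hurwitz_general hn₀l p hhom hHurwitz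
end
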